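/- arXiv:1601.06178 — 5 statements merged into one kernel-verified Lean document; each statement's English description precedes it below -/
import Mathlib

section
/- Let α > 1 and let u : ℝ³ → ℝ³ be a smooth, compactly supported vector field. Then ∫_{ℝ³} |u|^{2α} |∂₃u|² dx ≤ −∫_{ℝ³} |u|^{2α} u · ∂₃²u dx ≤ (1 + 2α) ∫_{ℝ³} |u|^{2α} |∂₃u|² dx. -/
open MeasureTheory

/-- Partial derivative in the `i`-th coordinate direction of a function on `ℝ³`. -/
noncomputable def pd (i : Fin 3) (f : (Fin 3 → ℝ) → ℝ) (x : Fin 3 → ℝ) : ℝ :=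
  fderiv ℝ f x (Pi.single i 1)


private lemma contDiff_pd {f : (Fin 3 → ℝ) → ℝ} (hf : ContDiff ℝ (⊤ : ℕ∞) f) :
    ContDiff ℝ (⊤ : ℕ∞) (pd 2 f) :=
  (hf.fderiv_right (by simp)).clm_apply contDiff_const

private lemma key_deriv (α : ℝ) (hα : 1 ≤ α) (u : (Fin 3 → ℝ) → (Fin 3 → ℝ))
    (hu : ContDiff ℝ (⊤ : ℕ∞) u) (x : Fin 3 → ℝ) :
    HasFDerivAt (fun y => (∑ i, u y i ^ 2) ^ α * ∑ l, u y l * pd 2 (fun z => u z l) y)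
      (((∑ i, u x i ^ 2) ^ α) •
          (∑ l, (u x l • fderiv ℝ (pd 2 (fun z => u z l)) x
            + pd 2 (fun z => u z l) x • fderiv ℝ (fun z => u z l) x))
        + (∑ l, u x l * pd 2 (fun z => u z l) x) •
            ((α * (∑ i, u x i ^ 2) ^ (α - 1)) •
              (∑ i, (u x i • fderiv ℝ (fun z => u z i) x
                + u x i • fderiv ℝ (fun z => u z i) x)))) x := by
  have hcd : ∀ l : Fin 3, ContDiff ℝ (⊤ : ℕ∞) (fun y => u y l) := fun l =>
    (ContinuousLinearMap.proj l : (Fin 3 → ℝ) →L[ℝ] ℝ).contDiff.comp hu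
  have hdc : ∀ l : Fin 3, HasFDerivAt (fun y => u y l) (fderiv ℝ (fun y => u y l) x) x :=
    fun l => ((hcd l).differentiable (by simp) x).hasFDerivAt
  have hdp : ∀ l : Fin 3, HasFDerivAt (pd 2 (fun z => u z l))
      (fderiv ℝ (pd 2 (fun z => u z l)) x) x :=
    fun l => ((contDiff_pd (hcd l)).differentiable (by simp) x).hasFDerivAt
  have hsd : HasFDerivAt (fun y => ∑ i, u y i ^ 2)
      (∑ i, (u x i • fderiv ℝ (fun z => u z i) x + u x i • fderiv ℝ (fun z => u z i) x)) x := by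
    apply HasFDerivAt.fun_sum
    intro i _
    have h2 : (fun y => u y i ^ 2) = fun y => u y i * u y i := by ext y; ring
    rw [h2]
    exact (hdc i).mul (hdc i)
  have hrs : HasFDerivAt (fun y => (∑ i, u y i ^ 2) ^ α)
      ((α * (∑ i, u x i ^ 2) ^ (α - 1)) •
        (∑ i, (u x i • fderiv ℝ (fun z => u z i) x + u x i • fderiv ℝ (fun z => u z i) x))) x :=
    (Real.hasDerivAt_rpow_const (Or.inr hα)).comp_hasFDerivAt x hsd
  have hwd : HasFDerivAt (fun y => ∑ l, u y l * pd 2 (fun z => u z l) y)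
      (∑ l, (u x l • fderiv ℝ (pd 2 (fun z => u z l)) x
        + pd 2 (fun z => u z l) x • fderiv ℝ (fun z => u z l) x)) x := by
    apply HasFDerivAt.fun_sum
    intro l _
    exact (hdc l).mul (hdp l)
  exact hrs.mul hwd

private lemma key_pd (α : ℝ) (hα : 1 ≤ α) (u : (Fin 3 → ℝ) → (Fin 3 → ℝ))
    (hu : ContDiff ℝ (⊤ : ℕ∞) u) (x : Fin 3 → ℝ) :
    pd 2 (fun y => (∑ i, u y i ^ 2) ^ α * ∑ l, u y l * pd 2 (fun z => u z l) y) x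
      = (∑ i, u x i ^ 2) ^ α * ((∑ l, (pd 2 (fun z => u z l) x) ^ 2)
          + ∑ l, u x l * pd 2 (pd 2 (fun z => u z l)) x)
        + 2 * α * (∑ i, u x i ^ 2) ^ (α - 1) * (∑ l, u x l * pd 2 (fun z => u z l) x) ^ 2 := by
  have h := (key_deriv α hα u hu x).fderiv
  show fderiv ℝ _ x (Pi.single 2 1) = _
  rw [h]
  simp only [ContinuousLinearMap.add_apply, ContinuousLinearMap.coe_smul', Pi.smul_apply,
    ContinuousLinearMap.coe_sum', Finset.sum_apply, smul_eq_mul, pd]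
  simp only [Finset.sum_add_distrib, ← pow_two]
  ring

private lemma integral_pd_eq_zero' {f : (Fin 3 → ℝ) → ℝ} (hf : Differentiable ℝ f)
    (h1 : Integrable f) (h2 : Integrable (pd 2 f)) :
    ∫ x, pd 2 f x = 0 := by
  have h := integral_mul_fderiv_eq_neg_fderiv_mul_of_integrable (μ := volume)
    (f := f) (g := fun _ => (1:ℝ)) (v := Pi.single 2 1)
    ?_ ?_ ?_ (fun x _ => hf x) (fun x _ => differentiableAt_const 1)
  · simp only [fderiv_fun_const, Pi.zero_apply, ContinuousLinearMap.zero_apply, mul_zero, mul_one,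
      integral_zero, zero_eq_neg] at h
    exact h
  · simpa [pd] using (show Integrable (fun x => pd 2 f x) from h2)
  · simp [integrable_zero]
  · simpa using h1


/-- For `α > 1` and a smooth, compactly supported vector field `u` on `ℝ³`,
`∫ |u|^{2α}|∂₃u|² ≤ −∫ |u|^{2α} u·∂₃²u ≤ (1+2α) ∫ |u|^{2α}|∂₃u|²`,
where `|u|^{2α} = (∑ᵢ uᵢ²)^α` (real power). -/
theorem stmt2 (α : ℝ) (hα : 1 < α) (u : (Fin 3 → ℝ) → (Fin 3 → ℝ))
    (hu : ContDiff ℝ (⊤ : ℕ∞) u) (hc : HasCompactSupport u) :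
    (∫ x : Fin 3 → ℝ, (∑ i, u x i ^ 2) ^ α * ∑ l, (pd 2 (fun y => u y l) x) ^ 2)
      ≤ -∫ x : Fin 3 → ℝ, (∑ i, u x i ^ 2) ^ α *
          ∑ l, u x l * pd 2 (pd 2 (fun y => u y l)) x
    ∧ -∫ x : Fin 3 → ℝ, (∑ i, u x i ^ 2) ^ α *
          ∑ l, u x l * pd 2 (pd 2 (fun y => u y l)) x
      ≤ (1 + 2 * α) *
          ∫ x : Fin 3 → ℝ, (∑ i, u x i ^ 2) ^ α * ∑ l, (pd 2 (fun y => u y l) x) ^ 2 := by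
  have hα0 : (0:ℝ) < α := lt_trans one_pos hα
  have hcd : ∀ l : Fin 3, ContDiff ℝ (⊤ : ℕ∞) (fun y => u y l) := fun l =>
    (ContinuousLinearMap.proj l : (Fin 3 → ℝ) →L[ℝ] ℝ).contDiff.comp hu
  have hpc : ∀ l : Fin 3, Continuous (pd 2 (fun y => u y l)) := fun l =>
    (contDiff_pd (hcd l)).continuous
  have hqc : ∀ l : Fin 3, Continuous (pd 2 (pd 2 (fun y => u y l))) := fun l =>
    (contDiff_pd (contDiff_pd (hcd l))).continuous
  have hucont : ∀ l : Fin 3, Continuous (fun y => u y l) := fun l =>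
    (continuous_apply l).comp hu.continuous
  have hsc : Continuous (fun x => ∑ i, u x i ^ 2) :=
    continuous_finset_sum _ fun i _ => (hucont i).pow 2
  have hsnn : ∀ x, (0:ℝ) ≤ ∑ i, u x i ^ 2 := fun x =>
    Finset.sum_nonneg fun i _ => sq_nonneg _
  have hsac : Continuous (fun x => (∑ i, u x i ^ 2) ^ α) :=
    hsc.rpow_const fun x => Or.inr hα0.le
  have hsbc : Continuous (fun x => (∑ i, u x i ^ 2) ^ (α - 1)) :=
    hsc.rpow_const fun x => Or.inr (by linarith)
  -- vanishing outside support
  have hvan : ∀ x ∉ tsupport u, u x = 0 := fun x hx => image_eq_zero_of_notMem_tsupport hx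
  have hs0 : ∀ x ∉ tsupport u, (∑ i, u x i ^ 2) = 0 := by
    intro x hx; simp [hvan x hx]
  have hsa0 : ∀ x ∉ tsupport u, (∑ i, u x i ^ 2) ^ α = 0 := by
    intro x hx; rw [hs0 x hx]; exact Real.zero_rpow (ne_of_gt hα0)
  have hw0 : ∀ x ∉ tsupport u, (∑ l, u x l * pd 2 (fun y => u y l) x) = 0 := by
    intro x hx
    refine Finset.sum_eq_zero fun l _ => ?_
    have : u x l = 0 := by rw [hvan x hx]; rfl
    rw [this, zero_mul]
  -- integrands
  have hint1 : Integrable (fun x => (∑ i, u x i ^ 2) ^ α * ∑ l, (pd 2 (fun y => u y l) x) ^ 2) := by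
    apply Continuous.integrable_of_hasCompactSupport
    · exact hsac.mul (continuous_finset_sum _ fun l _ => (hpc l).pow 2)
    · exact HasCompactSupport.intro hc fun x hx => by rw [hsa0 x hx, zero_mul]
  have hint2 : Integrable (fun x => (∑ i, u x i ^ 2) ^ α *
      ∑ l, u x l * pd 2 (pd 2 (fun y => u y l)) x) := by
    apply Continuous.integrable_of_hasCompactSupport
    · exact hsac.mul (continuous_finset_sum _ fun l _ => (hucont l).mul (hqc l))
    · exact HasCompactSupport.intro hc fun x hx => by rw [hsa0 x hx, zero_mul]
  have hint3 : Integrable (fun x => (∑ i, u x i ^ 2) ^ (α - 1) *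
      (∑ l, u x l * pd 2 (fun y => u y l) x) ^ 2) := by
    apply Continuous.integrable_of_hasCompactSupport
    · exact hsbc.mul ((continuous_finset_sum _ fun l _ => (hucont l).mul (hpc l)).pow 2)
    · exact HasCompactSupport.intro hc fun x hx => by
        rw [hw0 x hx]; simp
  have hintF : Integrable (fun x => (∑ i, u x i ^ 2) ^ α *
      ∑ l, u x l * pd 2 (fun y => u y l) x) := by
    apply Continuous.integrable_of_hasCompactSupport
    · exact hsac.mul (continuous_finset_sum _ fun l _ => (hucont l).mul (hpc l))
    · exact HasCompactSupport.intro hc fun x hx => by rw [hsa0 x hx, zero_mul]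
  have hdiffF : Differentiable ℝ (fun y => (∑ i, u y i ^ 2) ^ α *
      ∑ l, u y l * pd 2 (fun z => u z l) y) := fun x =>
    (key_deriv α hα.le u hu x).differentiableAt
  have hsplit : pd 2 (fun y => (∑ i, u y i ^ 2) ^ α * ∑ l, u y l * pd 2 (fun z => u z l) y)
      = fun x => ((∑ i, u x i ^ 2) ^ α * ∑ l, (pd 2 (fun y => u y l) x) ^ 2
          + (∑ i, u x i ^ 2) ^ α * ∑ l, u x l * pd 2 (pd 2 (fun y => u y l)) x)
          + 2 * α * ((∑ i, u x i ^ 2) ^ (α - 1) *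
            (∑ l, u x l * pd 2 (fun y => u y l) x) ^ 2) := by
    funext x
    rw [key_pd α hα.le u hu x]
    ring
  have hintpdF : Integrable (pd 2 (fun y => (∑ i, u y i ^ 2) ^ α *
      ∑ l, u y l * pd 2 (fun z => u z l) y)) := by
    rw [hsplit]
    exact (hint1.add hint2).add (hint3.const_mul _)
  have hzero : (∫ x, (∑ i, u x i ^ 2) ^ α * ∑ l, (pd 2 (fun y => u y l) x) ^ 2)
      + (∫ x, (∑ i, u x i ^ 2) ^ α * ∑ l, u x l * pd 2 (pd 2 (fun y => u y l)) x)
      + 2 * α * ∫ x, (∑ i, u x i ^ 2) ^ (α - 1) *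
          (∑ l, u x l * pd 2 (fun y => u y l) x) ^ 2 = 0 := by
    have h0 := integral_pd_eq_zero' hdiffF hintF hintpdF
    rw [hsplit] at h0
    have h0' : ∫ x, ((∑ i, u x i ^ 2) ^ α * ∑ l, (pd 2 (fun y => u y l) x) ^ 2
          + (∑ i, u x i ^ 2) ^ α * ∑ l, u x l * pd 2 (pd 2 (fun y => u y l)) x
          + 2 * α * ((∑ i, u x i ^ 2) ^ (α - 1) *
            (∑ l, u x l * pd 2 (fun y => u y l) x) ^ 2)) = 0 := h0
    have e1 : ∫ x, ((∑ i, u x i ^ 2) ^ α * ∑ l, (pd 2 (fun y => u y l) x) ^ 2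
          + (∑ i, u x i ^ 2) ^ α * ∑ l, u x l * pd 2 (pd 2 (fun y => u y l)) x
          + 2 * α * ((∑ i, u x i ^ 2) ^ (α - 1) *
            (∑ l, u x l * pd 2 (fun y => u y l) x) ^ 2))
        = (∫ x, ((∑ i, u x i ^ 2) ^ α * ∑ l, (pd 2 (fun y => u y l) x) ^ 2
          + (∑ i, u x i ^ 2) ^ α * ∑ l, u x l * pd 2 (pd 2 (fun y => u y l)) x))
          + ∫ x, 2 * α * ((∑ i, u x i ^ 2) ^ (α - 1) *
            (∑ l, u x l * pd 2 (fun y => u y l) x) ^ 2) :=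
      integral_add (by exact hint1.add hint2) (by exact hint3.const_mul _)
    have e2 : ∫ x, ((∑ i, u x i ^ 2) ^ α * ∑ l, (pd 2 (fun y => u y l) x) ^ 2
          + (∑ i, u x i ^ 2) ^ α * ∑ l, u x l * pd 2 (pd 2 (fun y => u y l)) x)
        = (∫ x, (∑ i, u x i ^ 2) ^ α * ∑ l, (pd 2 (fun y => u y l) x) ^ 2)
          + ∫ x, (∑ i, u x i ^ 2) ^ α * ∑ l, u x l * pd 2 (pd 2 (fun y => u y l)) x :=
      integral_add hint1 hint2
    have e3 : ∫ x, 2 * α * ((∑ i, u x i ^ 2) ^ (α - 1) *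
            (∑ l, u x l * pd 2 (fun y => u y l) x) ^ 2)
        = 2 * α * ∫ x, (∑ i, u x i ^ 2) ^ (α - 1) *
            (∑ l, u x l * pd 2 (fun y => u y l) x) ^ 2 :=
      integral_const_mul _ _
    linarith
  have hCnn : 0 ≤ ∫ x, (∑ i, u x i ^ 2) ^ (α - 1) *
      (∑ l, u x l * pd 2 (fun y => u y l) x) ^ 2 :=
    integral_nonneg fun x => mul_nonneg (Real.rpow_nonneg (hsnn x) _) (sq_nonneg _)
  have hCA : (∫ x, (∑ i, u x i ^ 2) ^ (α - 1) * (∑ l, u x l * pd 2 (fun y => u y l) x) ^ 2)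
      ≤ ∫ x, (∑ i, u x i ^ 2) ^ α * ∑ l, (pd 2 (fun y => u y l) x) ^ 2 := by
    apply integral_mono hint3 hint1
    intro x
    dsimp only
    have hcs2 := Finset.sum_mul_sq_le_sq_mul_sq Finset.univ (fun l => u x l)
      (fun l => pd 2 (fun y => u y l) x)
    rcases eq_or_lt_of_le (hsnn x) with h0 | h0
    · have hw2 : (∑ l, u x l * pd 2 (fun y => u y l) x) ^ 2 = 0 := by
        have : (∑ l, u x l * pd 2 (fun y => u y l) x) ^ 2 ≤ 0 := by
          calc _ ≤ _ := hcs2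
          _ = 0 := by rw [← h0, zero_mul]
        exact le_antisymm this (sq_nonneg _)
      rw [hw2, mul_zero]
      exact mul_nonneg (Real.rpow_nonneg (hsnn x) _) (Finset.sum_nonneg fun l _ => sq_nonneg _)
    · calc (∑ i, u x i ^ 2) ^ (α - 1) * (∑ l, u x l * pd 2 (fun y => u y l) x) ^ 2
          ≤ (∑ i, u x i ^ 2) ^ (α - 1) *
            ((∑ i, u x i ^ 2) * ∑ l, (pd 2 (fun y => u y l) x) ^ 2) :=
            mul_le_mul_of_nonneg_left hcs2 (Real.rpow_nonneg (hsnn x) _)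
        _ = (∑ i, u x i ^ 2) ^ α * ∑ l, (pd 2 (fun y => u y l) x) ^ 2 := by
            rw [← mul_assoc, ← Real.rpow_add_one (ne_of_gt h0)]
            ring_nf
  have h2ac : 0 ≤ 2 * α * ∫ x, (∑ i, u x i ^ 2) ^ (α - 1) *
      (∑ l, u x l * pd 2 (fun y => u y l) x) ^ 2 :=
    mul_nonneg (by linarith) hCnn
  have h2ca : 2 * α * (∫ x, (∑ i, u x i ^ 2) ^ (α - 1) *
        (∑ l, u x l * pd 2 (fun y => u y l) x) ^ 2)
      ≤ 2 * α * ∫ x, (∑ i, u x i ^ 2) ^ α * ∑ l, (pd 2 (fun y => u y l) x) ^ 2 :=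
    mul_le_mul_of_nonneg_left hCA (by linarith)
  have hexp : (1 + 2 * α) * (∫ x, (∑ i, u x i ^ 2) ^ α * ∑ l, (pd 2 (fun y => u y l) x) ^ 2)
      = (∫ x, (∑ i, u x i ^ 2) ^ α * ∑ l, (pd 2 (fun y => u y l) x) ^ 2)
        + 2 * α * ∫ x, (∑ i, u x i ^ 2) ^ α * ∑ l, (pd 2 (fun y => u y l) x) ^ 2 := by ring
  exact ⟨by linarith, by linarith⟩
end

section
/- There exists a constant γ > 0 such that for every α > 1, all ε₀, ε₁ > 0, and every smooth, compactly supported, divergence-free vector field u : ℝ³ → ℝ³, one has ∫_{ℝ³} ((u·∇)u) · ∂₃²u dx ≤ (γε₁/(4ε₀)) ∫_{ℝ³} |u|^{2α} |∂₃u|² dx + (γ ε₁^{1/(1−α)}/(4ε₀)) ∫_{ℝ³} |∂₃u|² dx + γ ε₀ ∫_{ℝ³} |∇_h ∂₃u|² dx. -/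
open MeasureTheory

abbrev E3 : Type := Fin 3 → ℝ

structure Nice (f : E3 → ℝ) : Prop where
  smooth : ContDiff ℝ (⊤ : ℕ∞) f
  supp : HasCompactSupport f

namespace Nice

lemma cont {f : E3 → ℝ} (h : Nice f) : Continuous f := h.smooth.continuous

lemma diff {f : E3 → ℝ} (h : Nice f) : Differentiable ℝ f :=
  h.smooth.differentiable (by simp)

lemma pd' {f : E3 → ℝ} (h : Nice f) (i : Fin 3) : Nice (pd i f) := by
  constructor
  · exact (h.smooth.fderiv_right (by simp)).clm_apply contDiff_const
  · show HasCompactSupport fun x => fderiv ℝ f x (Pi.single i 1)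
    exact h.supp.fderiv_apply (𝕜 := ℝ) _

lemma mul {f g : E3 → ℝ} (hf : Nice f) (hg : Nice g) : Nice (fun x => f x * g x) :=
  ⟨hf.smooth.mul hg.smooth, hf.supp.mul_right⟩

lemma add {f g : E3 → ℝ} (hf : Nice f) (hg : Nice g) : Nice (fun x => f x + g x) :=
  ⟨hf.smooth.add hg.smooth, hf.supp.add hg.supp⟩

lemma integrable {f : E3 → ℝ} (h : Nice f) : Integrable f :=
  h.cont.integrable_of_hasCompactSupport h.supp

end Nice

lemma pd_mul {f g : E3 → ℝ} (hf : Differentiable ℝ f) (hg : Differentiable ℝ g) (i : Fin 3)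
    (x : E3) : pd i (fun y => f y * g y) x = pd i f x * g x + f x * pd i g x := by
  unfold pd
  rw [fderiv_fun_mul (hf x) (hg x)]
  simp [ContinuousLinearMap.add_apply, ContinuousLinearMap.smul_apply, smul_eq_mul]
  ring

lemma pd_comm {f : E3 → ℝ} (hf : ContDiff ℝ (⊤ : ℕ∞) f) (i j : Fin 3) (x : E3) :
    pd i (pd j f) x = pd j (pd i f) x := by
  have hsymm := (hf.contDiffAt (x := x)).isSymmSndFDerivAt (by rw [minSmoothness_of_isRCLikeNormedField]; exact WithTop.coe_le_coe.mpr le_top)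
  have hdf : DifferentiableAt ℝ (fderiv ℝ f) x :=
    ((hf.fderiv_right (m := (⊤ : ℕ∞)) (by simp)).differentiable (by simp)).differentiableAt
  have e1 : ∀ v w : E3, fderiv ℝ (fun y => fderiv ℝ f y w) x v
      = fderiv ℝ (fderiv ℝ f) x v w := by
    intro v w
    rw [fderiv_clm_apply hdf (differentiableAt_const w)]
    simp
  unfold pd
  rw [e1, e1, hsymm]

lemma nice_ibp {f g : E3 → ℝ} (hf : Nice f) (hg : Nice g) (i : Fin 3) :
    ∫ x : E3, f x * pd i g x = - ∫ x : E3, pd i f x * g x := by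
  unfold pd
  exact integral_mul_fderiv_eq_neg_fderiv_mul_of_integrable
    ((hf.pd' i).mul hg).integrable (hf.mul (hg.pd' i)).integrable (hf.mul hg).integrable
    (fun x _ => hf.diff x) (fun x _ => hg.diff x)

lemma nice_ibp' {f g : E3 → ℝ} (hf : Nice f) (hg : Nice g) (i : Fin 3) :
    ∫ x : E3, pd i f x * g x = - ∫ x : E3, f x * pd i g x := by
  rw [nice_ibp hf hg i]; ring
lemma s6_young {α ε₁ : ℝ} (hα : 1 < α) (hε₁ : 0 < ε₁) {t : ℝ} (ht : 0 ≤ t) :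
    t ≤ ε₁ * t ^ α + ε₁ ^ (1 / (1 - α)) := by
  rcases le_or_gt t (ε₁ ^ (1 / (1 - α))) with h | h
  · have h0 : 0 ≤ ε₁ * t ^ α := mul_nonneg hε₁.le (Real.rpow_nonneg ht α)
    linarith
  · have hc : 0 < ε₁ ^ (1 / (1 - α)) := Real.rpow_pos_of_pos hε₁ _
    have htpos : 0 < t := hc.trans h
    have hne : (1 : ℝ) - α ≠ 0 := by intro h'; nlinarith
    have e : (ε₁ ^ (1 / (1 - α))) ^ (α - 1) = ε₁⁻¹ := by
      rw [← Real.rpow_mul hε₁.le]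
      rw [show 1 / (1 - α) * (α - 1) = -1 by field_simp; ring]
      exact Real.rpow_neg_one ε₁
    have h2 : ε₁⁻¹ ≤ t ^ (α - 1) := by
      rw [← e]; exact Real.rpow_le_rpow hc.le h.le (by linarith)
    have h3 : t ^ α = t * t ^ (α - 1) := by
      nth_rewrite 1 [show α = 1 + (α - 1) by ring]
      rw [Real.rpow_add htpos, Real.rpow_one]
    have h4 : 1 ≤ ε₁ * t ^ (α - 1) := by
      have := mul_le_mul_of_nonneg_left h2 hε₁.le
      rwa [mul_inv_cancel₀ hε₁.ne'] at this
    have h5 : t * 1 ≤ t * (ε₁ * t ^ (α - 1)) := mul_le_mul_of_nonneg_left h4 htpos.le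
    have h6 : t ≤ ε₁ * t ^ α := by
      calc t = t * 1 := by ring
        _ ≤ t * (ε₁ * t ^ (α - 1)) := h5
        _ = ε₁ * t ^ α := by rw [h3]; ring
    linarith [hc.le]

lemma s6_triple {ε₀ a b c NN PP HH : ℝ} (hε₀ : 0 < ε₀) (ha : a ^ 2 ≤ NN) (hb : b ^ 2 ≤ PP)
    (hc : c ^ 2 ≤ HH) (hN : 0 ≤ NN) :
    a * b * c ≤ ε₀ * HH + 1 / (4 * ε₀) * (NN * PP) := by
  have h1 : a ^ 2 * b ^ 2 ≤ NN * PP := mul_le_mul ha hb (sq_nonneg b) hN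
  rw [← mul_le_mul_iff_right₀ (show (0:ℝ) < 4 * ε₀ by linarith)]
  have e : 4 * ε₀ * (ε₀ * HH + 1 / (4 * ε₀) * (NN * PP)) = 4 * ε₀ ^ 2 * HH + NN * PP := by
    field_simp
  rw [e]
  nlinarith [sq_nonneg (a * b - 2 * ε₀ * c), h1,
    mul_le_mul_of_nonneg_left hc (show (0:ℝ) ≤ 4 * ε₀ ^ 2 by positivity)]

noncomputable def s6M (α ε₀ ε₁ : ℝ) (f : Fin 3 → E3 → ℝ) (x : E3) : ℝ :=
  ε₀ * (∑ l : Fin 3, ((pd 0 (pd 2 (f l)) x) ^ 2 + (pd 1 (pd 2 (f l)) x) ^ 2))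
    + ε₁ / (4 * ε₀) * ((∑ i, f i x ^ 2) ^ α * ∑ l, (pd 2 (f l) x) ^ 2)
    + ε₁ ^ (1 / (1 - α)) / (4 * ε₀) * (∑ l, (pd 2 (f l) x) ^ 2)

lemma s6_key {α ε₀ ε₁ : ℝ} (hα : 1 < α) (hε₀ : 0 < ε₀) (hε₁ : 0 < ε₁)
    (f : Fin 3 → E3 → ℝ) (l : Fin 3) (x : E3) :
    f l x * (pd 0 (pd 2 (f 0)) x * pd 2 (f l) x + pd 2 (f 0) x * pd 0 (pd 2 (f l)) x)
      + f l x * (pd 1 (pd 2 (f 1)) x * pd 2 (f l) x + pd 2 (f 1) x * pd 1 (pd 2 (f l)) x)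
      + (-2 : ℝ) * (f 0 x * pd 2 (f l) x * pd 0 (pd 2 (f l)) x)
      + (-2 : ℝ) * (f 1 x * pd 2 (f l) x * pd 1 (pd 2 (f l)) x)
      ≤ 8 * s6M α ε₀ ε₁ f x := by
  have hNx : ∀ j : Fin 3, f j x ^ 2 ≤ ∑ i, f i x ^ 2 := fun j =>
    Finset.single_le_sum (fun i _ => sq_nonneg (f i x)) (Finset.mem_univ j)
  have hPx : ∀ j : Fin 3, pd 2 (f j) x ^ 2 ≤ ∑ l : Fin 3, (pd 2 (f l) x) ^ 2 := fun j =>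
    Finset.single_le_sum (f := fun i => pd 2 (f i) x ^ 2) (fun i _ => sq_nonneg _)
      (Finset.mem_univ j)
  have hH0 : ∀ j : Fin 3, pd 0 (pd 2 (f j)) x ^ 2
      ≤ ∑ l : Fin 3, ((pd 0 (pd 2 (f l)) x) ^ 2 + (pd 1 (pd 2 (f l)) x) ^ 2) := fun j =>
    le_trans (le_add_of_nonneg_right (sq_nonneg _))
      (Finset.single_le_sum (f := fun i => (pd 0 (pd 2 (f i)) x) ^ 2 + (pd 1 (pd 2 (f i)) x) ^ 2)
        (fun i _ => by positivity) (Finset.mem_univ j))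
  have hH1 : ∀ j : Fin 3, pd 1 (pd 2 (f j)) x ^ 2
      ≤ ∑ l : Fin 3, ((pd 0 (pd 2 (f l)) x) ^ 2 + (pd 1 (pd 2 (f l)) x) ^ 2) := fun j =>
    le_trans (le_add_of_nonneg_left (sq_nonneg _))
      (Finset.single_le_sum (f := fun i => (pd 0 (pd 2 (f i)) x) ^ 2 + (pd 1 (pd 2 (f i)) x) ^ 2)
        (fun i _ => by positivity) (Finset.mem_univ j))
  have hNnn : (0:ℝ) ≤ ∑ i, f i x ^ 2 := Finset.sum_nonneg fun i _ => sq_nonneg _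
  have hyoung : (∑ i, f i x ^ 2)
      ≤ ε₁ * (∑ i, f i x ^ 2) ^ α + ε₁ ^ (1 / (1 - α)) := s6_young hα hε₁ hNnn
  have hNNnn : (0:ℝ) ≤ ε₁ * (∑ i, f i x ^ 2) ^ α + ε₁ ^ (1 / (1 - α)) := by positivity
  have hNle : ∀ j : Fin 3, f j x ^ 2 ≤ ε₁ * (∑ i, f i x ^ 2) ^ α + ε₁ ^ (1 / (1 - α)) :=
    fun j => le_trans (hNx j) hyoung
  have hNle0 : (-(f 0 x)) ^ 2 ≤ ε₁ * (∑ i, f i x ^ 2) ^ α + ε₁ ^ (1 / (1 - α)) := by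
    rw [neg_sq]; exact hNle 0
  have hNle1 : (-(f 1 x)) ^ 2 ≤ ε₁ * (∑ i, f i x ^ 2) ^ α + ε₁ ^ (1 / (1 - α)) := by
    rw [neg_sq]; exact hNle 1
  have t1 := s6_triple hε₀ (hNle l) (hPx l) (hH0 0) hNNnn
  have t2 := s6_triple hε₀ (hNle l) (hPx 0) (hH0 l) hNNnn
  have t3 := s6_triple hε₀ (hNle l) (hPx l) (hH1 1) hNNnn
  have t4 := s6_triple hε₀ (hNle l) (hPx 1) (hH1 l) hNNnn
  have t5 := s6_triple hε₀ hNle0 (hPx l) (hH0 l) hNNnn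
  have t6 := s6_triple hε₀ hNle1 (hPx l) (hH1 l) hNNnn
  have hsplit : 1 / (4 * ε₀) * ((ε₁ * (∑ i, f i x ^ 2) ^ α + ε₁ ^ (1 / (1 - α)))
        * ∑ l : Fin 3, (pd 2 (f l) x) ^ 2)
      = ε₁ / (4 * ε₀) * ((∑ i, f i x ^ 2) ^ α * ∑ l : Fin 3, (pd 2 (f l) x) ^ 2)
        + ε₁ ^ (1 / (1 - α)) / (4 * ε₀) * (∑ l : Fin 3, (pd 2 (f l) x) ^ 2) := by
    field_simp
  simp only [s6M]
  linarith [t1, t2, t3, t4, t5, t6, hsplit]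
lemma nice_sum3 (g : Fin 3 → E3 → ℝ) (h : ∀ l, Nice (g l)) :
    Nice (fun x => ∑ l : Fin 3, g l x) := by
  have e : (fun x => ∑ l : Fin 3, g l x) = fun x => g 0 x + g 1 x + g 2 x :=
    funext fun x => Fin.sum_univ_three _
  rw [e]; exact ((h 0).add (h 1)).add (h 2)

lemma nice_sq {g : E3 → ℝ} (h : Nice g) : Nice (fun x => g x ^ 2) := by
  have e : (fun x => g x ^ 2) = fun x => g x * g x := funext fun x => sq (g x)
  rw [e]; exact h.mul h

lemma s6_main {α ε₀ ε₁ : ℝ} (hα : 1 < α) (hε₀ : 0 < ε₀) (hε₁ : 0 < ε₁)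
    (f : Fin 3 → E3 → ℝ) (hf : ∀ k, Nice (f k))
    (hdiv : ∀ x, ∑ k : Fin 3, pd k (f k) x = 0) :
    (∫ x : E3, ∑ l : Fin 3,
        (∑ k : Fin 3, f k x * pd k (f l) x) * pd 2 (pd 2 (f l)) x)
      ≤ 24 * ε₁ / (4 * ε₀) *
          (∫ x : E3, (∑ i, f i x ^ 2) ^ α * ∑ l, (pd 2 (f l) x) ^ 2)
        + 24 * ε₁ ^ (1 / (1 - α)) / (4 * ε₀) * (∫ x : E3, ∑ l, (pd 2 (f l) x) ^ 2)
        + 24 * ε₀ * (∫ x : E3, ∑ l : Fin 3,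
            ((pd 0 (pd 2 (f l)) x) ^ 2 + (pd 1 (pd 2 (f l)) x) ^ 2)) := by
  have hG : ∀ l, Nice (pd 2 (f l)) := fun l => (hf l).pd' 2
  have hGG : ∀ l, Nice (fun x => pd 2 (f l) x * pd 2 (f l) x) := fun l => (hG l).mul (hG l)
  -- Step 1: split the integral into a double sum of integrals
  have h1 : ∀ l k : Fin 3,
      Integrable (fun x : E3 => f k x * pd k (f l) x * pd 2 (pd 2 (f l)) x) :=
    fun l k => (((hf k).mul ((hf l).pd' k)).mul (((hf l).pd' 2).pd' 2)).integrable
  have step1 : (∫ x : E3, ∑ l : Fin 3,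
        (∑ k : Fin 3, f k x * pd k (f l) x) * pd 2 (pd 2 (f l)) x)
      = ∑ l : Fin 3, ∑ k : Fin 3,
          ∫ x : E3, f k x * pd k (f l) x * pd 2 (pd 2 (f l)) x := by
    simp only [Finset.sum_mul]
    rw [integral_finset_sum _ (fun l _ => integrable_finset_sum _ (fun k _ => h1 l k))]
    exact Finset.sum_congr rfl fun l _ => integral_finset_sum _ (fun k _ => h1 l k)
  -- Step 2: integrate by parts in the x₃ direction
  have step2 : ∀ k l : Fin 3, (∫ x : E3, f k x * pd k (f l) x * pd 2 (pd 2 (f l)) x)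
      = -(∫ x : E3, pd 2 (f k) x * pd k (f l) x * pd 2 (f l) x)
        - ∫ x : E3, f k x * pd k (pd 2 (f l)) x * pd 2 (f l) x := by
    intro k l
    have hF : Nice (fun x => f k x * pd k (f l) x) := (hf k).mul ((hf l).pd' k)
    have h0 : (∫ x : E3, f k x * pd k (f l) x * pd 2 (pd 2 (f l)) x)
        = - ∫ x : E3, pd 2 (fun x => f k x * pd k (f l) x) x * pd 2 (f l) x :=
      nice_ibp hF (hG l) 2
    rw [h0]
    have h2 : ∀ x : E3, pd 2 (fun x => f k x * pd k (f l) x) x * pd 2 (f l) x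
        = pd 2 (f k) x * pd k (f l) x * pd 2 (f l) x
          + f k x * pd k (pd 2 (f l)) x * pd 2 (f l) x := by
      intro x
      rw [pd_mul (hf k).diff ((hf l).pd' k).diff, pd_comm (hf l).smooth 2 k x]
      ring
    simp only [h2]
    rw [integral_add ((((hf k).pd' 2).mul ((hf l).pd' k)).mul (hG l)).integrable
      (((hf k).mul (((hf l).pd' 2).pd' k)).mul (hG l)).integrable]
    ring
  -- Step 3: the transport term vanishes
  have step3 : ∀ l : Fin 3,
      ∑ k : Fin 3, (∫ x : E3, f k x * pd k (pd 2 (f l)) x * pd 2 (f l) x) = 0 := by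
    intro l
    have e1 : ∀ k : Fin 3, (∫ x : E3, f k x * pd k (pd 2 (f l)) x * pd 2 (f l) x)
        = -(1/2 : ℝ) * ∫ x : E3, pd k (f k) x * (pd 2 (f l) x * pd 2 (f l) x) := by
      intro k
      have h2 : ∀ x : E3, f k x * pd k (fun y => pd 2 (f l) y * pd 2 (f l) y) x
          = 2 * (f k x * pd k (pd 2 (f l)) x * pd 2 (f l) x) := by
        intro x; rw [pd_mul (hG l).diff (hG l).diff]; ring
      have h3 : (∫ x : E3, f k x * pd k (fun y => pd 2 (f l) y * pd 2 (f l) y) x)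
          = - ∫ x : E3, pd k (f k) x * (pd 2 (f l) x * pd 2 (f l) x) :=
        nice_ibp (hf k) (hGG l) k
      have h4 : (∫ x : E3, f k x * pd k (fun y => pd 2 (f l) y * pd 2 (f l) y) x)
          = 2 * ∫ x : E3, f k x * pd k (pd 2 (f l)) x * pd 2 (f l) x := by
        simp only [h2]; rw [integral_const_mul]
      rw [h4] at h3
      linarith [h3]
    have e2 : ∑ k : Fin 3,
        (-(1/2 : ℝ) * ∫ x : E3, pd k (f k) x * (pd 2 (f l) x * pd 2 (f l) x)) = 0 := by
      rw [← Finset.mul_sum,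
        ← integral_finset_sum _ (fun k _ => (((hf k).pd' k).mul (hGG l)).integrable)]
      have hz : ∀ x : E3,
          ∑ k : Fin 3, pd k (f k) x * (pd 2 (f l) x * pd 2 (f l) x) = 0 := by
        intro x; rw [← Finset.sum_mul, hdiv x, zero_mul]
      simp only [hz]
      simp
    calc ∑ k : Fin 3, (∫ x : E3, f k x * pd k (pd 2 (f l)) x * pd 2 (f l) x)
        = ∑ k : Fin 3,
            (-(1/2 : ℝ) * ∫ x : E3, pd k (f k) x * (pd 2 (f l) x * pd 2 (f l) x)) :=
          Finset.sum_congr rfl fun k _ => e1 k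
      _ = 0 := e2
  -- Integration by parts for the horizontal terms
  have ibpA : ∀ (k l : Fin 3), (∫ x : E3, pd 2 (f k) x * pd k (f l) x * pd 2 (f l) x)
      = - ∫ x : E3, f l x *
          (pd k (pd 2 (f k)) x * pd 2 (f l) x + pd 2 (f k) x * pd k (pd 2 (f l)) x) := by
    intro k l
    have h1 : ∀ x : E3, pd 2 (f k) x * pd k (f l) x * pd 2 (f l) x
        = pd k (f l) x * (pd 2 (f k) x * pd 2 (f l) x) := fun x => by ring
    simp only [h1]
    have h2 : (∫ x : E3, pd k (f l) x * (pd 2 (f k) x * pd 2 (f l) x))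
        = - ∫ x : E3, f l x * pd k (fun y => pd 2 (f k) y * pd 2 (f l) y) x :=
      nice_ibp' (hf l) ((hG k).mul (hG l)) k
    rw [h2]
    have h3 : ∀ x : E3, f l x * pd k (fun y => pd 2 (f k) y * pd 2 (f l) y) x
        = f l x * (pd k (pd 2 (f k)) x * pd 2 (f l) x + pd 2 (f k) x * pd k (pd 2 (f l)) x) := by
      intro x; rw [pd_mul (hG k).diff (hG l).diff]
    simp only [h3]
  -- the k = 2 term, rewritten using the divergence-free condition
  have divA2 : ∀ l : Fin 3, (∫ x : E3, pd 2 (f 2) x * pd 2 (f l) x * pd 2 (f l) x)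
      = -(∫ x : E3, pd 0 (f 0) x * (pd 2 (f l) x * pd 2 (f l) x))
        - ∫ x : E3, pd 1 (f 1) x * (pd 2 (f l) x * pd 2 (f l) x) := by
    intro l
    have h1 : ∀ x : E3, pd 2 (f 2) x * pd 2 (f l) x * pd 2 (f l) x
        = -(pd 0 (f 0) x * (pd 2 (f l) x * pd 2 (f l) x))
          - pd 1 (f 1) x * (pd 2 (f l) x * pd 2 (f l) x) := by
      intro x
      have hd := hdiv x
      rw [Fin.sum_univ_three] at hd
      have : pd 2 (f 2) x = -pd 0 (f 0) x - pd 1 (f 1) x := by linarith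
      rw [this]; ring
    simp only [h1]
    have hAneg : Integrable (fun x : E3 => -(pd 0 (f 0) x * (pd 2 (f l) x * pd 2 (f l) x))) :=
      (((hf 0).pd' 0).mul (hGG l)).integrable.neg
    rw [integral_sub hAneg (((hf 1).pd' 1).mul (hGG l)).integrable, integral_neg]
  have ibpdiag : ∀ (k l : Fin 3), (∫ x : E3, pd k (f k) x * (pd 2 (f l) x * pd 2 (f l) x))
      = -2 * ∫ x : E3, f k x * pd 2 (f l) x * pd k (pd 2 (f l)) x := by
    intro k l
    have h2 : (∫ x : E3, pd k (f k) x * (pd 2 (f l) x * pd 2 (f l) x))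
        = - ∫ x : E3, f k x * pd k (fun y => pd 2 (f l) y * pd 2 (f l) y) x :=
      nice_ibp' (hf k) (hGG l) k
    rw [h2]
    have h3 : ∀ x : E3, f k x * pd k (fun y => pd 2 (f l) y * pd 2 (f l) y) x
        = 2 * (f k x * pd 2 (f l) x * pd k (pd 2 (f l)) x) := by
      intro x; rw [pd_mul (hG l).diff (hG l).diff]; ring
    simp only [h3]
    rw [integral_const_mul]; ring
  -- the representation formula
  have repr : (∫ x : E3, ∑ l : Fin 3,
        (∑ k : Fin 3, f k x * pd k (f l) x) * pd 2 (pd 2 (f l)) x)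
      = ∑ l : Fin 3,
          ((∫ x : E3, f l x *
              (pd 0 (pd 2 (f 0)) x * pd 2 (f l) x + pd 2 (f 0) x * pd 0 (pd 2 (f l)) x))
           + (∫ x : E3, f l x *
              (pd 1 (pd 2 (f 1)) x * pd 2 (f l) x + pd 2 (f 1) x * pd 1 (pd 2 (f l)) x))
           + (-2 : ℝ) * (∫ x : E3, f 0 x * pd 2 (f l) x * pd 0 (pd 2 (f l)) x)
           + (-2 : ℝ) * (∫ x : E3, f 1 x * pd 2 (f l) x * pd 1 (pd 2 (f l)) x)) := by
    rw [step1]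
    apply Finset.sum_congr rfl
    intro l _
    rw [Fin.sum_univ_three]
    rw [step2 0 l, step2 1 l, step2 2 l]
    have hB := step3 l
    rw [Fin.sum_univ_three] at hB
    rw [ibpA 0 l, ibpA 1 l, divA2 l, ibpdiag 0 l, ibpdiag 1 l]
    linarith [hB]
  -- integrability of all the pieces
  have nIA : ∀ l : Fin 3, Nice (fun x => f l x *
      (pd 0 (pd 2 (f 0)) x * pd 2 (f l) x + pd 2 (f 0) x * pd 0 (pd 2 (f l)) x)) :=
    fun l => (hf l).mul ((((hG 0).pd' 0).mul (hG l)).add ((hG 0).mul ((hG l).pd' 0)))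
  have nIB : ∀ l : Fin 3, Nice (fun x => f l x *
      (pd 1 (pd 2 (f 1)) x * pd 2 (f l) x + pd 2 (f 1) x * pd 1 (pd 2 (f l)) x)) :=
    fun l => (hf l).mul ((((hG 1).pd' 1).mul (hG l)).add ((hG 1).mul ((hG l).pd' 1)))
  have nIC : ∀ l : Fin 3, Nice (fun x => f 0 x * pd 2 (f l) x * pd 0 (pd 2 (f l)) x) :=
    fun l => ((hf 0).mul (hG l)).mul ((hG l).pd' 0)
  have nID : ∀ l : Fin 3, Nice (fun x => f 1 x * pd 2 (f l) x * pd 1 (pd 2 (f l)) x) :=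
    fun l => ((hf 1).mul (hG l)).mul ((hG l).pd' 1)
  have combine : ∀ l : Fin 3,
      ((∫ x : E3, f l x *
          (pd 0 (pd 2 (f 0)) x * pd 2 (f l) x + pd 2 (f 0) x * pd 0 (pd 2 (f l)) x))
       + (∫ x : E3, f l x *
          (pd 1 (pd 2 (f 1)) x * pd 2 (f l) x + pd 2 (f 1) x * pd 1 (pd 2 (f l)) x))
       + (-2 : ℝ) * (∫ x : E3, f 0 x * pd 2 (f l) x * pd 0 (pd 2 (f l)) x)
       + (-2 : ℝ) * (∫ x : E3, f 1 x * pd 2 (f l) x * pd 1 (pd 2 (f l)) x))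
      = ∫ x : E3,
          (f l x * (pd 0 (pd 2 (f 0)) x * pd 2 (f l) x + pd 2 (f 0) x * pd 0 (pd 2 (f l)) x)
           + f l x * (pd 1 (pd 2 (f 1)) x * pd 2 (f l) x + pd 2 (f 1) x * pd 1 (pd 2 (f l)) x)
           + (-2 : ℝ) * (f 0 x * pd 2 (f l) x * pd 0 (pd 2 (f l)) x)
           + (-2 : ℝ) * (f 1 x * pd 2 (f l) x * pd 1 (pd 2 (f l)) x)) := by
    intro l
    have iAB : (∫ x : E3,
          (f l x * (pd 0 (pd 2 (f 0)) x * pd 2 (f l) x + pd 2 (f 0) x * pd 0 (pd 2 (f l)) x)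
           + f l x * (pd 1 (pd 2 (f 1)) x * pd 2 (f l) x + pd 2 (f 1) x * pd 1 (pd 2 (f l)) x)))
        = (∫ x : E3, f l x *
            (pd 0 (pd 2 (f 0)) x * pd 2 (f l) x + pd 2 (f 0) x * pd 0 (pd 2 (f l)) x))
          + ∫ x : E3, f l x *
            (pd 1 (pd 2 (f 1)) x * pd 2 (f l) x + pd 2 (f 1) x * pd 1 (pd 2 (f l)) x) :=
      integral_add (nIA l).integrable (nIB l).integrable
    have iC : (∫ x : E3,
          (f l x * (pd 0 (pd 2 (f 0)) x * pd 2 (f l) x + pd 2 (f 0) x * pd 0 (pd 2 (f l)) x)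
           + f l x * (pd 1 (pd 2 (f 1)) x * pd 2 (f l) x + pd 2 (f 1) x * pd 1 (pd 2 (f l)) x)
           + (-2 : ℝ) * (f 0 x * pd 2 (f l) x * pd 0 (pd 2 (f l)) x)))
        = (∫ x : E3,
            (f l x * (pd 0 (pd 2 (f 0)) x * pd 2 (f l) x + pd 2 (f 0) x * pd 0 (pd 2 (f l)) x)
             + f l x * (pd 1 (pd 2 (f 1)) x * pd 2 (f l) x + pd 2 (f 1) x * pd 1 (pd 2 (f l)) x)))
          + ∫ x : E3, (-2 : ℝ) * (f 0 x * pd 2 (f l) x * pd 0 (pd 2 (f l)) x) :=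
      integral_add ((nIA l).add (nIB l)).integrable ((nIC l).integrable.const_mul (-2))
    have iD : (∫ x : E3,
          (f l x * (pd 0 (pd 2 (f 0)) x * pd 2 (f l) x + pd 2 (f 0) x * pd 0 (pd 2 (f l)) x)
           + f l x * (pd 1 (pd 2 (f 1)) x * pd 2 (f l) x + pd 2 (f 1) x * pd 1 (pd 2 (f l)) x)
           + (-2 : ℝ) * (f 0 x * pd 2 (f l) x * pd 0 (pd 2 (f l)) x)
           + (-2 : ℝ) * (f 1 x * pd 2 (f l) x * pd 1 (pd 2 (f l)) x)))
        = (∫ x : E3,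
            (f l x * (pd 0 (pd 2 (f 0)) x * pd 2 (f l) x + pd 2 (f 0) x * pd 0 (pd 2 (f l)) x)
             + f l x * (pd 1 (pd 2 (f 1)) x * pd 2 (f l) x + pd 2 (f 1) x * pd 1 (pd 2 (f l)) x)
             + (-2 : ℝ) * (f 0 x * pd 2 (f l) x * pd 0 (pd 2 (f l)) x)))
          + ∫ x : E3, (-2 : ℝ) * (f 1 x * pd 2 (f l) x * pd 1 (pd 2 (f l)) x) :=
      integral_add (((nIA l).add (nIB l)).integrable.add
        ((nIC l).integrable.const_mul (-2))) ((nID l).integrable.const_mul (-2))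
    have iC2 : (∫ x : E3, (-2 : ℝ) * (f 0 x * pd 2 (f l) x * pd 0 (pd 2 (f l)) x))
        = (-2 : ℝ) * ∫ x : E3, f 0 x * pd 2 (f l) x * pd 0 (pd 2 (f l)) x :=
      integral_const_mul _ _
    have iD2 : (∫ x : E3, (-2 : ℝ) * (f 1 x * pd 2 (f l) x * pd 1 (pd 2 (f l)) x))
        = (-2 : ℝ) * ∫ x : E3, f 1 x * pd 2 (f l) x * pd 1 (pd 2 (f l)) x :=
      integral_const_mul _ _
    rw [iD, iC, iAB, iC2, iD2]
  -- integrability of the majorant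
  have nH : Nice (fun x => ∑ l : Fin 3,
      ((pd 0 (pd 2 (f l)) x) ^ 2 + (pd 1 (pd 2 (f l)) x) ^ 2)) :=
    nice_sum3 _ (fun l => (nice_sq ((hG l).pd' 0)).add (nice_sq ((hG l).pd' 1)))
  have nP : Nice (fun x => ∑ l : Fin 3, (pd 2 (f l) x) ^ 2) :=
    nice_sum3 _ (fun l => nice_sq (hG l))
  have hQcont : Continuous (fun x : E3 => (∑ i, f i x ^ 2) ^ α) := by
    apply Continuous.rpow_const
    · exact continuous_finset_sum _ fun i _ => ((hf i).cont.pow 2)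
    · intro x; right; linarith
  have intQP : Integrable (fun x : E3 => (∑ i, f i x ^ 2) ^ α * ∑ l, (pd 2 (f l) x) ^ 2) :=
    (hQcont.mul nP.cont).integrable_of_hasCompactSupport (nP.supp.mul_left)
  have intM : Integrable (fun x => s6M α ε₀ ε₁ f x) := by
    unfold s6M
    exact ((nH.integrable.const_mul ε₀).add (intQP.const_mul _)).add
      (nP.integrable.const_mul _)
  have mono : ∀ l : Fin 3,
      (∫ x : E3,
          (f l x * (pd 0 (pd 2 (f 0)) x * pd 2 (f l) x + pd 2 (f 0) x * pd 0 (pd 2 (f l)) x)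
           + f l x * (pd 1 (pd 2 (f 1)) x * pd 2 (f l) x + pd 2 (f 1) x * pd 1 (pd 2 (f l)) x)
           + (-2 : ℝ) * (f 0 x * pd 2 (f l) x * pd 0 (pd 2 (f l)) x)
           + (-2 : ℝ) * (f 1 x * pd 2 (f l) x * pd 1 (pd 2 (f l)) x)))
      ≤ ∫ x : E3, 8 * s6M α ε₀ ε₁ f x := by
    intro l
    apply integral_mono
      ((((nIA l).add (nIB l)).integrable.add ((nIC l).integrable.const_mul (-2))).add
        ((nID l).integrable.const_mul (-2)))
      (intM.const_mul 8)
    intro x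
    exact s6_key hα hε₀ hε₁ f l x
  have intMeq : (∫ x : E3, s6M α ε₀ ε₁ f x)
      = ε₀ * (∫ x : E3, ∑ l : Fin 3,
            ((pd 0 (pd 2 (f l)) x) ^ 2 + (pd 1 (pd 2 (f l)) x) ^ 2))
        + ε₁ / (4 * ε₀) *
            (∫ x : E3, (∑ i, f i x ^ 2) ^ α * ∑ l, (pd 2 (f l) x) ^ 2)
        + ε₁ ^ (1 / (1 - α)) / (4 * ε₀) * (∫ x : E3, ∑ l, (pd 2 (f l) x) ^ 2) := by
    have e1 : (∫ x : E3,
          (ε₀ * (∑ l : Fin 3, ((pd 0 (pd 2 (f l)) x) ^ 2 + (pd 1 (pd 2 (f l)) x) ^ 2))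
           + ε₁ / (4 * ε₀) * ((∑ i, f i x ^ 2) ^ α * ∑ l, (pd 2 (f l) x) ^ 2)
           + ε₁ ^ (1 / (1 - α)) / (4 * ε₀) * (∑ l, (pd 2 (f l) x) ^ 2)))
        = (∫ x : E3,
            (ε₀ * (∑ l : Fin 3, ((pd 0 (pd 2 (f l)) x) ^ 2 + (pd 1 (pd 2 (f l)) x) ^ 2))
             + ε₁ / (4 * ε₀) * ((∑ i, f i x ^ 2) ^ α * ∑ l, (pd 2 (f l) x) ^ 2)))
          + ∫ x : E3, ε₁ ^ (1 / (1 - α)) / (4 * ε₀) * (∑ l, (pd 2 (f l) x) ^ 2) :=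
      integral_add ((nH.integrable.const_mul ε₀).add (intQP.const_mul _))
        (nP.integrable.const_mul _)
    have e2 : (∫ x : E3,
          (ε₀ * (∑ l : Fin 3, ((pd 0 (pd 2 (f l)) x) ^ 2 + (pd 1 (pd 2 (f l)) x) ^ 2))
           + ε₁ / (4 * ε₀) * ((∑ i, f i x ^ 2) ^ α * ∑ l, (pd 2 (f l) x) ^ 2)))
        = (∫ x : E3, ε₀ * (∑ l : Fin 3, ((pd 0 (pd 2 (f l)) x) ^ 2 + (pd 1 (pd 2 (f l)) x) ^ 2)))
          + ∫ x : E3, ε₁ / (4 * ε₀) * ((∑ i, f i x ^ 2) ^ α * ∑ l, (pd 2 (f l) x) ^ 2) :=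
      integral_add (nH.integrable.const_mul ε₀) (intQP.const_mul _)
    have e3 : (∫ x : E3,
          ε₀ * (∑ l : Fin 3, ((pd 0 (pd 2 (f l)) x) ^ 2 + (pd 1 (pd 2 (f l)) x) ^ 2)))
        = ε₀ * ∫ x : E3, ∑ l : Fin 3, ((pd 0 (pd 2 (f l)) x) ^ 2 + (pd 1 (pd 2 (f l)) x) ^ 2) :=
      integral_const_mul _ _
    have e4 : (∫ x : E3, ε₁ / (4 * ε₀) * ((∑ i, f i x ^ 2) ^ α * ∑ l, (pd 2 (f l) x) ^ 2))
        = ε₁ / (4 * ε₀) * ∫ x : E3, (∑ i, f i x ^ 2) ^ α * ∑ l, (pd 2 (f l) x) ^ 2 :=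
      integral_const_mul _ _
    have e5 : (∫ x : E3, ε₁ ^ (1 / (1 - α)) / (4 * ε₀) * (∑ l, (pd 2 (f l) x) ^ 2))
        = ε₁ ^ (1 / (1 - α)) / (4 * ε₀) * ∫ x : E3, ∑ l, (pd 2 (f l) x) ^ 2 :=
      integral_const_mul _ _
    show (∫ x : E3,
          (ε₀ * (∑ l : Fin 3, ((pd 0 (pd 2 (f l)) x) ^ 2 + (pd 1 (pd 2 (f l)) x) ^ 2))
           + ε₁ / (4 * ε₀) * ((∑ i, f i x ^ 2) ^ α * ∑ l, (pd 2 (f l) x) ^ 2)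
           + ε₁ ^ (1 / (1 - α)) / (4 * ε₀) * (∑ l, (pd 2 (f l) x) ^ 2))) = _
    rw [e1, e2, e3, e4, e5]
  calc (∫ x : E3, ∑ l : Fin 3,
        (∑ k : Fin 3, f k x * pd k (f l) x) * pd 2 (pd 2 (f l)) x)
      = ∑ l : Fin 3,
          ((∫ x : E3, f l x *
              (pd 0 (pd 2 (f 0)) x * pd 2 (f l) x + pd 2 (f 0) x * pd 0 (pd 2 (f l)) x))
           + (∫ x : E3, f l x *
              (pd 1 (pd 2 (f 1)) x * pd 2 (f l) x + pd 2 (f 1) x * pd 1 (pd 2 (f l)) x))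
           + (-2 : ℝ) * (∫ x : E3, f 0 x * pd 2 (f l) x * pd 0 (pd 2 (f l)) x)
           + (-2 : ℝ) * (∫ x : E3, f 1 x * pd 2 (f l) x * pd 1 (pd 2 (f l)) x)) := repr
    _ ≤ ∑ l : Fin 3, ∫ x : E3, 8 * s6M α ε₀ ε₁ f x := by
        rw [Fin.sum_univ_three]
        rw [combine 0, combine 1, combine 2]
        have := mono 0
        have := mono 1
        have := mono 2
        rw [Fin.sum_univ_three]
        linarith [mono 0, mono 1, mono 2]
    _ = 24 * (∫ x : E3, s6M α ε₀ ε₁ f x) := by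
        rw [Fin.sum_univ_three, integral_const_mul]; ring
    _ = 24 * ε₁ / (4 * ε₀) *
          (∫ x : E3, (∑ i, f i x ^ 2) ^ α * ∑ l, (pd 2 (f l) x) ^ 2)
        + 24 * ε₁ ^ (1 / (1 - α)) / (4 * ε₀) * (∫ x : E3, ∑ l, (pd 2 (f l) x) ^ 2)
        + 24 * ε₀ * (∫ x : E3, ∑ l : Fin 3,
            ((pd 0 (pd 2 (f l)) x) ^ 2 + (pd 1 (pd 2 (f l)) x) ^ 2)) := by
        rw [intMeq]; ring
lemma nice_comp (u : (Fin 3 → ℝ) → (Fin 3 → ℝ)) (hu : ContDiff ℝ (⊤ : ℕ∞) u)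
    (hsupp : HasCompactSupport u) (l : Fin 3) : Nice (fun y => u y l) := by
  constructor
  · exact (ContinuousLinearMap.proj (R := ℝ) (φ := fun _ : Fin 3 => ℝ) l).contDiff.comp hu
  · exact hsupp.comp_left (g := fun v : Fin 3 → ℝ => v l) rfl


/-- There is a constant `γ > 0` such that for every `α > 1`, `ε₀, ε₁ > 0` and every smooth,
compactly supported, divergence-free vector field `u` on `ℝ³`,
`∫ ((u·∇)u)·∂₃²u ≤ (γε₁/(4ε₀)) ∫ |u|^{2α}|∂₃u|² + (γε₁^{1/(1−α)}/(4ε₀)) ∫ |∂₃u|²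
  + γε₀ ∫ |∇_h ∂₃u|²`, where `|u|^{2α} = (∑ᵢ uᵢ²)^α`. -/
theorem stmt6 :
    ∃ γ : ℝ, 0 < γ ∧
      ∀ (α ε₀ ε₁ : ℝ), 1 < α → 0 < ε₀ → 0 < ε₁ →
      ∀ u : (Fin 3 → ℝ) → (Fin 3 → ℝ), ContDiff ℝ (⊤ : ℕ∞) u → HasCompactSupport u →
      (∀ x, ∑ k : Fin 3, pd k (fun y => u y k) x = 0) →
      (∫ x : Fin 3 → ℝ, ∑ l : Fin 3,
          (∑ k : Fin 3, u x k * pd k (fun y => u y l) x) * pd 2 (pd 2 (fun y => u y l)) x)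
        ≤ γ * ε₁ / (4 * ε₀) *
            (∫ x : Fin 3 → ℝ, (∑ i, u x i ^ 2) ^ α * ∑ l, (pd 2 (fun y => u y l) x) ^ 2)
          + γ * ε₁ ^ (1 / (1 - α)) / (4 * ε₀) *
            (∫ x : Fin 3 → ℝ, ∑ l, (pd 2 (fun y => u y l) x) ^ 2)
          + γ * ε₀ *
            (∫ x : Fin 3 → ℝ, ∑ l : Fin 3,
              ((pd 0 (pd 2 (fun y => u y l)) x) ^ 2 + (pd 1 (pd 2 (fun y => u y l)) x) ^ 2)) := by
  refine ⟨24, by norm_num, ?_⟩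
  intro α ε₀ ε₁ hα hε₀ hε₁ u hu hsupp hdiv
  exact s6_main hα hε₀ hε₁ (fun l y => u y l) (fun l => nice_comp u hu hsupp l) hdiv
end

section
/- Let w = (w₁, w₂, w₃) : ℝ³ → ℝ³ be a smooth, compactly supported, divergence-free vector field. Then for every x₃ ∈ ℝ one has ∫_{ℝ²} |w₃(x_h, x₃)|² dx_h ≤ 2 ‖∂₁w₁ + ∂₂w₂‖_{L²(ℝ³)} ‖w₃‖_{L²(ℝ³)}, where x_h = (x₁, x₂). -/
open MeasureTheory

/-- Cauchy–Schwarz for integrals. -/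
lemma cs_integral {α : Type*} [MeasurableSpace α] {μ : Measure α} {f g : α → ℝ}
    (hf : Integrable (fun x => f x ^ 2) μ) (hg : Integrable (fun x => g x ^ 2) μ)
    (hfg : Integrable (fun x => |f x| * |g x|) μ) :
    ∫ x, |f x| * |g x| ∂μ ≤
      Real.sqrt (∫ x, f x ^ 2 ∂μ) * Real.sqrt (∫ x, g x ^ 2 ∂μ) := by
  set A := ∫ x, f x ^ 2 ∂μ with hA
  set B := ∫ x, g x ^ 2 ∂μ with hB
  set I := ∫ x, |f x| * |g x| ∂μ with hI
  have hA0 : 0 ≤ A := integral_nonneg fun x => sq_nonneg _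
  have hB0 : 0 ≤ B := integral_nonneg fun x => sq_nonneg _
  have hI0 : 0 ≤ I := integral_nonneg fun x => mul_nonneg (abs_nonneg _) (abs_nonneg _)
  have key : ∀ t : ℝ, 0 ≤ B * (t * t) + (-2 * I) * t + A := by
    intro t
    have h1 : 0 ≤ ∫ x, (|f x| - t * |g x|) ^ 2 ∂μ :=
      integral_nonneg fun x => sq_nonneg _
    have h2 : ∀ x, (|f x| - t * |g x|) ^ 2
        = f x ^ 2 - (2 * t) * (|f x| * |g x|) + t ^ 2 * g x ^ 2 := by
      intro x
      have hf2 : |f x| ^ 2 = f x ^ 2 := sq_abs _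
      have hg2 : |g x| ^ 2 = g x ^ 2 := sq_abs _
      nlinarith [sq_nonneg (|f x| - t * |g x|)]
    have h3 : (∫ x, (|f x| - t * |g x|) ^ 2 ∂μ)
        = A - (2 * t) * I + t ^ 2 * B := by
      rw [hA, hB, hI]
      simp_rw [h2]
      have i1 : Integrable (fun x => f x ^ 2 - 2 * t * (|f x| * |g x|)) μ :=
        hf.sub (hfg.const_mul (2 * t))
      have i2 : Integrable (fun x => t ^ 2 * g x ^ 2) μ := hg.const_mul (t ^ 2)
      have i3 : Integrable (fun x => 2 * t * (|f x| * |g x|)) μ := hfg.const_mul (2 * t)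
      rw [integral_add i1 i2, integral_sub hf i3, integral_const_mul, integral_const_mul]
    nlinarith [h1, h3]
  have hd := discrim_le_zero key
  rw [discrim] at hd
  have hsq : I ^ 2 ≤ A * B := by nlinarith
  calc I = Real.sqrt (I ^ 2) := (Real.sqrt_sq hI0).symm
    _ ≤ Real.sqrt (A * B) := Real.sqrt_le_sqrt hsq
    _ = Real.sqrt A * Real.sqrt B := Real.sqrt_mul hA0 _


/-- For a smooth, compactly supported, divergence-free vector field `w` on `ℝ³` and every
height `x₃`, `∫_{ℝ²} |w₃(x_h,x₃)|² dx_h ≤ 2 ‖∂₁w₁ + ∂₂w₂‖_{L²(ℝ³)} ‖w₃‖_{L²(ℝ³)}`. -/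
theorem stmt10 (w : (Fin 3 → ℝ) → (Fin 3 → ℝ))
    (hw : ContDiff ℝ (⊤ : ℕ∞) w) (hc : HasCompactSupport w)
    (hdiv : ∀ x, ∑ k : Fin 3, pd k (fun y => w y k) x = 0)
    (x₃ : ℝ) :
    ∫ xh : Fin 2 → ℝ, (w (Fin.snoc xh x₃) 2) ^ 2 ≤
      2 * Real.sqrt (∫ x : Fin 3 → ℝ,
            (pd 0 (fun y => w y 0) x + pd 1 (fun y => w y 1) x) ^ 2) *
        Real.sqrt (∫ x : Fin 3 → ℝ, (w x 2) ^ 2) := by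
  set W3 : (Fin 3 → ℝ) → ℝ := fun y => w y 2 with hW3def
  set D : (Fin 3 → ℝ) → ℝ := pd 2 W3 with hDdef
  have hW3 : ContDiff ℝ (⊤ : ℕ∞) W3 :=
    (ContinuousLinearMap.proj (R := ℝ) (φ := fun _ : Fin 3 => ℝ) 2).contDiff.comp hw
  have hcW3 : HasCompactSupport W3 := hc.comp_left (g := fun v : Fin 3 → ℝ => v 2) rfl
  have hDcont : Continuous D := by
    have h1 := hW3.continuous_fderiv_apply (n := (⊤ : ℕ∞)) (by simp)
    exact h1.comp (continuous_id.prodMk continuous_const)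
  have hsub : tsupport W3 ⊆ tsupport w := by
    apply closure_mono
    intro x hx
    simp only [Function.mem_support] at hx ⊢
    intro h; rw [hW3def] at hx; simp [h] at hx
  have hD0 : ∀ x, x ∉ tsupport w → D x = 0 := by
    intro x hx
    have : x ∉ tsupport W3 := fun h => hx (hsub h)
    have h2 : fderiv ℝ W3 x = 0 := by
      by_contra h
      exact this (support_fderiv_subset ℝ (by simpa [Function.mem_support] using h))
    rw [hDdef]; unfold pd; rw [h2]; rfl
  have hw30 : ∀ x, x ∉ tsupport w → W3 x = 0 := by
    intro x hx
    rw [hW3def]; simp [image_eq_zero_of_notMem_tsupport hx]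
  -- integrability helper
  have mkInt : ∀ (f : (Fin 3 → ℝ) → ℝ), Continuous f → (∀ x, x ∉ tsupport w → f x = 0)
      → Integrable f volume := fun f hf h0 =>
    hf.integrable_of_hasCompactSupport (HasCompactSupport.intro hc h0)
  have hW3c : Continuous W3 := hW3.continuous
  have IW3sq : Integrable (fun x => W3 x ^ 2) volume :=
    mkInt _ (by fun_prop) (fun x hx => by simp [hw30 x hx])
  have IDsq : Integrable (fun x => D x ^ 2) volume :=
    mkInt _ (by fun_prop) (fun x hx => by simp [hD0 x hx])
  have IDW : Integrable (fun x => |D x| * |W3 x|) volume :=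
    mkInt _ (by fun_prop) (fun x hx => by simp [hw30 x hx])
  -- bounding radius
  obtain ⟨R, hR0, hR⟩ : ∃ R : ℝ, 0 < R ∧ tsupport w ⊆ Metric.closedBall 0 R :=
    hc.isCompact.isBounded.subset_closedBall_lt 0 0
  have hnot : ∀ x : Fin 3 → ℝ, R < ‖x‖ → x ∉ tsupport w := by
    intro x hx hmem
    have := hR hmem
    rw [Metric.mem_closedBall, dist_zero_right] at this
    linarith
  have hsnoc_eq : ∀ (xh : Fin 2 → ℝ) (s : ℝ),
      (Fin.snoc xh s : Fin 3 → ℝ) = (Fin.snoc xh 0 : Fin 3 → ℝ) + s • (Pi.single 2 1 : Fin 3 → ℝ) := by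
    intro xh s; funext j
    induction j using Fin.lastCases with
    | last =>
      rw [show ((Fin.last 2 : Fin 3)) = 2 from rfl]
      rw [show (2:Fin 3) = Fin.last 2 from rfl]; simp only [Pi.add_apply, Pi.smul_apply, Fin.snoc_last, Pi.single_eq_same, smul_eq_mul, mul_one, zero_add]
    | cast i =>
      have hne : (i.castSucc : Fin 3) ≠ 2 := by
        rw [show (2:Fin 3) = Fin.last 2 from rfl]; exact (Fin.castSucc_lt_last i).ne
      simp [Fin.snoc_castSucc, Pi.single_eq_of_ne hne]
  have hsnocc : ∀ xh : Fin 2 → ℝ, Continuous fun t : ℝ => (Fin.snoc xh t : Fin 3 → ℝ) := by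
    intro xh
    have h : (fun t : ℝ => (Fin.snoc xh t : Fin 3 → ℝ))
        = fun t => (Fin.snoc xh 0 : Fin 3 → ℝ) + t • (Pi.single 2 1 : Fin 3 → ℝ) := funext (hsnoc_eq xh)
    rw [h]
    exact continuous_const.add (continuous_id.smul continuous_const)
  have hnorm_t : ∀ (xh : Fin 2 → ℝ) (t : ℝ), |t| ≤ ‖(Fin.snoc xh t : Fin 3 → ℝ)‖ := by
    intro xh t
    have h := norm_le_pi_norm (Fin.snoc xh t : Fin 3 → ℝ) 2
    rw [show (2:Fin 3) = Fin.last 2 from rfl] at h; simp only [Fin.snoc_last, Real.norm_eq_abs] at h; exact h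
  have hderiv : ∀ (xh : Fin 2 → ℝ) (t : ℝ),
      HasDerivAt (fun s : ℝ => W3 (Fin.snoc xh s)) (D (Fin.snoc xh t)) t := by
    intro xh t
    have hline : HasDerivAt
        (fun s : ℝ => (Fin.snoc xh (0:ℝ) : Fin 3 → ℝ) + s • (Pi.single 2 1 : Fin 3 → ℝ))
        (Pi.single 2 1) t := by
      simpa using
        ((hasDerivAt_id t).smul_const (Pi.single (2 : Fin 3) (1:ℝ))).const_add
          (Fin.snoc xh (0:ℝ) : Fin 3 → ℝ)
    have hF' : HasFDerivAt W3 (fderiv ℝ W3 (Fin.snoc xh t))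
        ((Fin.snoc xh (0:ℝ) : Fin 3 → ℝ) + t • (Pi.single 2 1 : Fin 3 → ℝ)) := by
      rw [← hsnoc_eq]
      exact (hW3.differentiable (by simp) (Fin.snoc xh t)).hasFDerivAt
    have hcomp := hF'.comp_hasDerivAt t hline
    have heq : (fun s : ℝ => W3 (Fin.snoc xh s))
        = W3 ∘ (fun s : ℝ => (Fin.snoc xh (0:ℝ) : Fin 3 → ℝ) + s • (Pi.single 2 1 : Fin 3 → ℝ)) := by
      funext s
      simp only [Function.comp_apply, ← hsnoc_eq xh s]
    rw [hDdef]; unfold pd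
    rw [heq]
    exact hcomp
  set H : (Fin 3 → ℝ) → ℝ := fun x => 2 * (|D x| * |W3 x|) with hHdef
  have hHcont : Continuous H := by
    rw [hHdef]; fun_prop
  have IH : Integrable H volume :=
    mkInt _ hHcont (fun x hx => by simp [hHdef, hw30 x hx])
  have hpt : ∀ xh : Fin 2 → ℝ,
      (W3 (Fin.snoc xh x₃)) ^ 2 ≤ ∫ t : ℝ, H (Fin.snoc xh t) := by
    intro xh
    set a : ℝ := -(R + |x₃| + 1) with hadef
    have hax : |a| = R + |x₃| + 1 := by
      rw [hadef, abs_neg, abs_of_nonneg (by positivity)]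
    have ha_le : a ≤ x₃ := by
      have h1 := neg_abs_le x₃
      rw [hadef]; linarith
    have ha0 : W3 (Fin.snoc xh a) = 0 := by
      apply hw30
      apply hnot
      have h1 := hnorm_t xh a
      rw [hax] at h1
      linarith [abs_nonneg x₃]
    have hder2 : ∀ t : ℝ, HasDerivAt (fun s => (W3 (Fin.snoc xh s)) ^ 2)
        (2 * W3 (Fin.snoc xh t) * D (Fin.snoc xh t)) t := by
      intro t
      have h := (hderiv xh t).fun_pow 2
      simpa using h
    have hcont1 : Continuous fun t : ℝ => 2 * W3 (Fin.snoc xh t) * D (Fin.snoc xh t) := by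
      have h1 := hW3c.comp (hsnocc xh)
      have h2 := hDcont.comp (hsnocc xh)
      exact (continuous_const.mul h1).mul h2
    have hcontH : Continuous fun t : ℝ => H (Fin.snoc xh t) := hHcont.comp (hsnocc xh)
    have hIH1 : Integrable (fun t : ℝ => H (Fin.snoc xh t)) volume := by
      apply hcontH.integrable_of_hasCompactSupport
      apply HasCompactSupport.intro (isCompact_Icc (a := -R) (b := R))
      intro t ht
      have h1 : R < |t| := by
        by_contra h
        push_neg at h
        exact ht (abs_le.mp h)
      have h2 := hnot _ (lt_of_lt_of_le h1 (hnorm_t xh t))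
      simp [hHdef, hw30 _ h2]
    have hftc : (W3 (Fin.snoc xh x₃)) ^ 2 - (W3 (Fin.snoc xh a)) ^ 2
        = ∫ t in a..x₃, 2 * W3 (Fin.snoc xh t) * D (Fin.snoc xh t) :=
      (intervalIntegral.integral_eq_sub_of_hasDerivAt (fun t _ => hder2 t)
        (hcont1.intervalIntegrable a x₃)).symm
    have h0 : (W3 (Fin.snoc xh x₃)) ^ 2
        = ∫ t in a..x₃, 2 * W3 (Fin.snoc xh t) * D (Fin.snoc xh t) := by
      rw [← hftc, ha0]; ring
    have hmono : (∫ t in a..x₃, 2 * W3 (Fin.snoc xh t) * D (Fin.snoc xh t))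
        ≤ ∫ t in a..x₃, H (Fin.snoc xh t) := by
      apply intervalIntegral.integral_mono_on ha_le (hcont1.intervalIntegrable a x₃)
        (hcontH.intervalIntegrable a x₃)
      intro t _
      simp only [hHdef]
      have h1 : W3 (Fin.snoc xh t) * D (Fin.snoc xh t)
          ≤ |W3 (Fin.snoc xh t)| * |D (Fin.snoc xh t)| :=
        (le_abs_self _).trans_eq (abs_mul _ _)
      nlinarith [h1]
    have hset : (∫ t in a..x₃, H (Fin.snoc xh t))
        = ∫ t in Set.Ioc a x₃, H (Fin.snoc xh t) :=
      intervalIntegral.integral_of_le ha_le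
    have hle2 : (∫ t in Set.Ioc a x₃, H (Fin.snoc xh t)) ≤ ∫ t : ℝ, H (Fin.snoc xh t) :=
      setIntegral_le_integral hIH1 (Filter.Eventually.of_forall fun t => by
        simp only [hHdef]; positivity)
    rw [h0]
    calc (∫ t in a..x₃, 2 * W3 (Fin.snoc xh t) * D (Fin.snoc xh t))
        ≤ ∫ t in a..x₃, H (Fin.snoc xh t) := hmono
      _ = ∫ t in Set.Ioc a x₃, H (Fin.snoc xh t) := hset
      _ ≤ ∫ t : ℝ, H (Fin.snoc xh t) := hle2
  -- transport to the product space
  set e := MeasurableEquiv.piFinSuccAbove (fun _ : Fin 3 => ℝ) 2 with hedef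
  have hvp := volume_preserving_piFinSuccAbove (fun _ : Fin 3 => ℝ) 2
  have hesymm : ∀ p : ℝ × (Fin 2 → ℝ), e.symm p = Fin.snoc p.2 p.1 := by
    intro p
    simp [hedef, MeasurableEquiv.piFinSuccAbove_symm_apply, Fin.insertNthEquiv]
    rw [show (2 : Fin 3) = Fin.last 2 from rfl, Fin.insertNth_last']
  have hIp : Integrable (fun p : ℝ × (Fin 2 → ℝ) => H (Fin.snoc p.2 p.1))
      (volume.prod volume) := by
    have h1 : Integrable (H ∘ e.symm) volume :=
      ((MeasurePreserving.symm e hvp).integrable_comp_emb e.symm.measurableEmbedding).mpr IH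
    rw [← Measure.volume_eq_prod]
    have h2 : (H ∘ e.symm) = fun p : ℝ × (Fin 2 → ℝ) => H (Fin.snoc p.2 p.1) := by
      funext p; simp [Function.comp, hesymm p]
    rwa [h2] at h1
  have hG : Integrable (fun xh : Fin 2 → ℝ => ∫ t : ℝ, H (Fin.snoc xh t)) volume :=
    hIp.integral_prod_right
  have hprod_eq : (∫ xh : Fin 2 → ℝ, ∫ t : ℝ, H (Fin.snoc xh t)) = ∫ x : Fin 3 → ℝ, H x := by
    have h1 := (MeasurePreserving.symm e hvp).integral_comp e.symm.measurableEmbedding H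
    have h2 : (∫ p : ℝ × (Fin 2 → ℝ), H (e.symm p)) = ∫ x : Fin 3 → ℝ, H x := h1
    rw [← h2]
    have h3 : (∫ p : ℝ × (Fin 2 → ℝ), H (e.symm p))
        = ∫ p : ℝ × (Fin 2 → ℝ), H (Fin.snoc p.2 p.1) := by
      congr 1; funext p; rw [hesymm p]
    rw [h3, Measure.volume_eq_prod]
    exact (integral_prod_symm _ hIp).symm
  have hstep1 : (∫ xh : Fin 2 → ℝ, (W3 (Fin.snoc xh x₃)) ^ 2) ≤ ∫ x : Fin 3 → ℝ, H x := by
    rw [← hprod_eq]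
    exact integral_mono_of_nonneg
      (Filter.Eventually.of_forall fun xh => sq_nonneg _)
      hG (Filter.Eventually.of_forall hpt)
  have hstep2 : (∫ x : Fin 3 → ℝ, H x) = 2 * ∫ x : Fin 3 → ℝ, |D x| * |W3 x| := by
    simp only [hHdef]
    exact integral_const_mul 2 _
  have hcs : (∫ x : Fin 3 → ℝ, |D x| * |W3 x|)
      ≤ Real.sqrt (∫ x : Fin 3 → ℝ, D x ^ 2) * Real.sqrt (∫ x : Fin 3 → ℝ, W3 x ^ 2) :=
    cs_integral IDsq IW3sq IDW
  have hDsq_eq : (∫ x : Fin 3 → ℝ, (pd 0 (fun y => w y 0) x + pd 1 (fun y => w y 1) x) ^ 2)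
      = ∫ x : Fin 3 → ℝ, D x ^ 2 := by
    congr 1; funext x
    have h := hdiv x
    rw [Fin.sum_univ_three] at h
    have h2 : pd 0 (fun y => w y 0) x + pd 1 (fun y => w y 1) x
        = -(pd 2 (fun y => w y 2) x) := by linarith
    rw [h2, neg_sq, hDdef, hW3def]
  calc (∫ xh : Fin 2 → ℝ, (w (Fin.snoc xh x₃) 2) ^ 2)
      = ∫ xh : Fin 2 → ℝ, (W3 (Fin.snoc xh x₃)) ^ 2 := rfl
    _ ≤ ∫ x : Fin 3 → ℝ, H x := hstep1
    _ = 2 * ∫ x : Fin 3 → ℝ, |D x| * |W3 x| := hstep2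
    _ ≤ 2 * (Real.sqrt (∫ x : Fin 3 → ℝ, D x ^ 2) * Real.sqrt (∫ x : Fin 3 → ℝ, W3 x ^ 2)) := by
        linarith [hcs]
    _ = 2 * Real.sqrt (∫ x : Fin 3 → ℝ,
            (pd 0 (fun y => w y 0) x + pd 1 (fun y => w y 1) x) ^ 2) *
        Real.sqrt (∫ x : Fin 3 → ℝ, (w x 2) ^ 2) := by
        rw [hDsq_eq]; ring_nf; rfl
end

section
/- There exists a constant C > 0 such that for every smooth, compactly supported function ψ : ℝ³ → ℝ one has ( ∫_ℝ ( ∫_{ℝ²} |ψ(x_h, x₃)|⁴ dx_h )^{1/2} dx₃ )^{1/2} ≤ C ‖∇_h ψ‖_{L²(ℝ³)}^{1/2} ‖ψ‖_{L²(ℝ³)}^{1/2}. -/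
open MeasureTheory

open Function Set Topology

lemma opNorm_le2 (L : (Fin 2 → ℝ) →L[ℝ] ℝ) :
    ‖L‖ ≤ |L (Pi.single 0 1)| + |L (Pi.single 1 1)| := by
  refine L.opNorm_le_bound (by positivity) (fun x => ?_)
  have hx : L x = x 0 * L (Pi.single 0 1) + x 1 * L (Pi.single 1 1) := by
    have h : x = x 0 • (Pi.single 0 1 : Fin 2 → ℝ) + x 1 • (Pi.single 1 1 : Fin 2 → ℝ) := by
      funext i; fin_cases i <;> simp
    conv_lhs => rw [h]
    simp [mul_comm]
  rw [Real.norm_eq_abs, hx]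
  have h0 : |x 0| ≤ ‖x‖ := by simpa using norm_le_pi_norm x 0
  have h1 : |x 1| ≤ ‖x‖ := by simpa using norm_le_pi_norm x 1
  have := abs_add_le (x 0 * L (Pi.single 0 1)) (x 1 * L (Pi.single 1 1))
  rw [abs_mul, abs_mul] at this
  nlinarith [abs_nonneg (L (Pi.single 0 1)), abs_nonneg (L (Pi.single 1 1)), abs_nonneg (x 0), abs_nonneg (x 1)]


lemma lady {g : (Fin 2 → ℝ) → ℝ} (hg : ContDiff ℝ (⊤ : ℕ∞) g) (h2g : HasCompactSupport g) :
    ∫ x, g x ^ 4 ≤ 8 * (∫ x, ((fderiv ℝ g x (Pi.single 0 1)) ^ 2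
        + (fderiv ℝ g x (Pi.single 1 1)) ^ 2)) * ∫ x, g x ^ 2 := by
  set d0 : (Fin 2 → ℝ) → ℝ := fun x => fderiv ℝ g x (Pi.single 0 1) with hd0def
  set d1 : (Fin 2 → ℝ) → ℝ := fun x => fderiv ℝ g x (Pi.single 1 1) with hd1def
  have hgc : Continuous g := hg.continuous
  have hfd : Continuous (fderiv ℝ g) := hg.continuous_fderiv (by simp)
  have hfdcs : HasCompactSupport (fderiv ℝ g) := h2g.fderiv ℝ
  have hd0c : Continuous d0 := hfd.clm_apply continuous_const
  have hd1c : Continuous d1 := hfd.clm_apply continuous_const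
  have hd0cs : HasCompactSupport d0 := by
    simpa [Function.comp_def] using hfdcs.comp_left (g := fun L : (Fin 2 → ℝ) →L[ℝ] ℝ => L (Pi.single 0 1)) (by simp)
  have hd1cs : HasCompactSupport d1 := by
    simpa [Function.comp_def] using hfdcs.comp_left (g := fun L : (Fin 2 → ℝ) →L[ℝ] ℝ => L (Pi.single 1 1)) (by simp)
  set H : (Fin 2 → ℝ) → ℝ := fun x => 2 * |g x| * (|d0 x| + |d1 x|) with hHdef
  have hHc : Continuous H := by fun_prop
  have hHcs : HasCompactSupport H := by
    apply HasCompactSupport.mul_right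
    simpa [Function.comp_def] using h2g.comp_left (g := fun y : ℝ => 2 * |y|) (by simp)
  have hHint : Integrable H := hHc.integrable_of_hasCompactSupport hHcs
  have hHnn : ∀ x, 0 ≤ H x := fun x => by positivity
  have hg4int : Integrable (fun x => g x ^ 4) := by
    have hcs : HasCompactSupport (fun x => g x ^ 4) := h2g.comp_left (g := fun y : ℝ => y ^ 4) (by simp)
    exact (hgc.pow 4).integrable_of_hasCompactSupport hcs
  have hg2int : Integrable (fun x => g x ^ 2) := by
    have hcs : HasCompactSupport (fun x => g x ^ 2) := h2g.comp_left (g := fun y : ℝ => y ^ 2) (by simp)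
    exact (hgc.pow 2).integrable_of_hasCompactSupport hcs
  have hDint : Integrable (fun x => d0 x ^ 2 + d1 x ^ 2) := by
    have hc0 : HasCompactSupport (fun x => d0 x ^ 2) := hd0cs.comp_left (g := fun y : ℝ => y ^ 2) (by simp)
    have hc1 : HasCompactSupport (fun x => d1 x ^ 2) := hd1cs.comp_left (g := fun y : ℝ => y ^ 2) (by simp)
    exact ((hd0c.pow 2).integrable_of_hasCompactSupport hc0).add
      ((hd1c.pow 2).integrable_of_hasCompactSupport hc1)
  -- step 1: ∫ g⁴ ≤ (∫ H)²
  have step1 : ∫ x, g x ^ 4 ≤ (∫ x, H x) ^ 2 := by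
    have hu : ContDiff ℝ 1 (fun x => g x ^ 2) := (hg.pow 2).of_le (by simp)
    have h2u : HasCompactSupport (fun x => g x ^ 2) := by
      simpa [Function.comp_def] using h2g.comp_left (g := fun y : ℝ => y ^ 2) (by simp)
    have hp : ((Fintype.card (Fin 2) : ℝ)).HolderConjugate 2 := by
      rw [Fintype.card_fin]
      exact Real.holderConjugate_iff.mpr ⟨by norm_num, by norm_num⟩
    have key := lintegral_pow_le_pow_lintegral_fderiv_aux hp hu h2u
    have hdu : ∀ x, fderiv ℝ (fun x => g x ^ 2) x = (2 * g x) • fderiv ℝ g x := by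
      intro x
      have h := ((hg.differentiable (by simp)) x).hasFDerivAt
      have h2 := h.mul h
      simp only [← pow_two] at h2
      rw [(show HasFDerivAt (fun x => g x ^ 2) (g x • fderiv ℝ g x + g x • fderiv ℝ g x) x from h2).fderiv, ← two_smul ℝ (g x • fderiv ℝ g x), smul_smul]
    have lhs_eq : (∫⁻ x, (‖(fun x => g x ^ 2) x‖₊ : ENNReal) ^ (2:ℝ))
        = ∫⁻ x, ENNReal.ofReal (g x ^ 4) := by
      refine lintegral_congr (fun x => ?_)
      rw [← ENNReal.ofReal_coe_nnreal, coe_nnnorm, ENNReal.ofReal_rpow_of_nonneg (norm_nonneg _) (by norm_num)]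
      congr 1
      rw [Real.rpow_two, Real.norm_eq_abs, abs_of_nonneg (sq_nonneg _)]
      ring
    have rhs_le : (∫⁻ x, (‖fderiv ℝ (fun x => g x ^ 2) x‖₊ : ENNReal))
        ≤ ∫⁻ x, ENNReal.ofReal (H x) := by
      refine lintegral_mono (fun x => ?_)
      rw [← ENNReal.ofReal_coe_nnreal, coe_nnnorm]
      apply ENNReal.ofReal_le_ofReal
      rw [hdu x, norm_smul]
      calc ‖2 * g x‖ * ‖fderiv ℝ g x‖ ≤ (2 * |g x|) * (|d0 x| + |d1 x|) := by
            apply mul_le_mul _ (opNorm_le2 _) (norm_nonneg _) (by positivity)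
            rw [Real.norm_eq_abs, abs_mul]
            simp
        _ = H x := by rw [hHdef]
    have e1 : ENNReal.ofReal (∫ x, g x ^ 4) = ∫⁻ x, ENNReal.ofReal (g x ^ 4) :=
      ofReal_integral_eq_lintegral_ofReal hg4int (Filter.Eventually.of_forall fun x => by positivity)
    have e2 : ENNReal.ofReal (∫ x, H x) = ∫⁻ x, ENNReal.ofReal (H x) :=
      ofReal_integral_eq_lintegral_ofReal hHint (Filter.Eventually.of_forall hHnn)
    have chain : ENNReal.ofReal (∫ x, g x ^ 4) ≤ ENNReal.ofReal ((∫ x, H x) ^ 2) := by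
      rw [e1, ← lhs_eq]
      refine key.trans ?_
      rw [show ((∫ x, H x) ^ 2 : ℝ) = ((∫ x, H x) ^ (2:ℝ) : ℝ) from (Real.rpow_two _).symm,
        ← ENNReal.ofReal_rpow_of_nonneg (integral_nonneg hHnn) (by norm_num), e2]
      exact ENNReal.rpow_le_rpow rhs_le (by norm_num)
    have := (ENNReal.ofReal_le_ofReal_iff (by positivity)).mp chain
    exact this
  -- step 2 : Cauchy-Schwarz
  have hCS : ∫ x, H x ≤ 2 * (Real.sqrt (∫ x, g x ^ 2) * Real.sqrt (2 * ∫ x, (d0 x ^ 2 + d1 x ^ 2))) := by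
    set f1 : (Fin 2 → ℝ) → ℝ := fun x => |g x| with hf1def
    set f2 : (Fin 2 → ℝ) → ℝ := fun x => |d0 x| + |d1 x| with hf2def
    have h12 : ∫ x, H x = 2 * ∫ x, f1 x * f2 x := by
      rw [← integral_const_mul]
      refine integral_congr_ae (Filter.Eventually.of_forall fun x => ?_)
      rw [hHdef, hf1def, hf2def]; ring
    have hf1cs : HasCompactSupport f1 := by
      simpa [Function.comp_def] using h2g.comp_left (g := fun y : ℝ => |y|) (by simp)
    have hf2cs : HasCompactSupport f2 := by
      apply HasCompactSupport.add
      · simpa [Function.comp_def] using hd0cs.comp_left (g := fun y : ℝ => |y|) (by simp)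
      · simpa [Function.comp_def] using hd1cs.comp_left (g := fun y : ℝ => |y|) (by simp)
    have hf1m : MemLp f1 (ENNReal.ofReal 2) := hgc.abs.memLp_of_hasCompactSupport hf1cs
    have hf2m : MemLp f2 (ENNReal.ofReal 2) :=
      (hd0c.abs.add hd1c.abs).memLp_of_hasCompactSupport hf2cs
    have hp2 : (2:ℝ).HolderConjugate 2 := Real.holderConjugate_iff.mpr ⟨by norm_num, by norm_num⟩
    have hH2 := integral_mul_le_Lp_mul_Lq_of_nonneg hp2
      (Filter.Eventually.of_forall fun x => abs_nonneg (g x))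
      (Filter.Eventually.of_forall fun x => by positivity) hf1m hf2m
    have e1 : ∫ x, f1 x ^ (2:ℝ) = ∫ x, g x ^ 2 := by
      refine integral_congr_ae (Filter.Eventually.of_forall fun x => ?_)
      simp only [hf1def, Real.rpow_two, sq_abs]
    have e2 : ∫ x, f2 x ^ (2:ℝ) ≤ 2 * ∫ x, (d0 x ^ 2 + d1 x ^ 2) := by
      rw [← integral_const_mul]
      refine integral_mono ?_ (hDint.const_mul 2) fun x => ?_
      · have : Integrable (fun x => f2 x ^ 2) := by
          have hcs : HasCompactSupport (fun x => f2 x ^ 2) := hf2cs.comp_left (g := fun y : ℝ => y ^ 2) (by simp)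
          exact ((hd0c.abs.add hd1c.abs).pow 2).integrable_of_hasCompactSupport hcs
        refine this.congr (Filter.Eventually.of_forall fun x => ?_)
        simp only [Real.rpow_two]
      · simp only [hf2def, Real.rpow_two]
        nlinarith [sq_nonneg (|d0 x| - |d1 x|), sq_abs (d0 x), sq_abs (d1 x)]
    have h2Dnn : (0:ℝ) ≤ 2 * ∫ x, (d0 x ^ 2 + d1 x ^ 2) :=
      mul_nonneg (by norm_num) (integral_nonneg fun x => by positivity)
    have hmono : (∫ x, f2 x ^ (2:ℝ)) ^ ((1:ℝ)/2) ≤ (2 * ∫ x, (d0 x ^ 2 + d1 x ^ 2)) ^ ((1:ℝ)/2) := by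
      apply Real.rpow_le_rpow _ e2 (by norm_num)
      exact integral_nonneg fun x => Real.rpow_nonneg (by positivity) _
    rw [h12]
    have hfin : ∫ x, f1 x * f2 x ≤ Real.sqrt (∫ x, g x ^ 2) * Real.sqrt (2 * ∫ x, (d0 x ^ 2 + d1 x ^ 2)) := by
      refine hH2.trans ?_
      rw [Real.sqrt_eq_rpow, Real.sqrt_eq_rpow, ← e1]
      exact mul_le_mul_of_nonneg_left hmono (Real.rpow_nonneg (integral_nonneg fun x => Real.rpow_nonneg (abs_nonneg _) _) _)
    linarith
  have h2nn : (0:ℝ) ≤ ∫ x, g x ^ 2 := integral_nonneg fun x => by positivity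
  have hDnn : (0:ℝ) ≤ ∫ x, (d0 x ^ 2 + d1 x ^ 2) := integral_nonneg fun x => by positivity
  have hHnn' : (0:ℝ) ≤ ∫ x, H x := integral_nonneg hHnn
  refine step1.trans ?_
  have hs1 := Real.sq_sqrt h2nn
  have hs2 := Real.sq_sqrt (by linarith : (0:ℝ) ≤ 2 * ∫ x, (d0 x ^ 2 + d1 x ^ 2))
  calc (∫ x, H x) ^ 2
      ≤ (2 * (Real.sqrt (∫ x, g x ^ 2) * Real.sqrt (2 * ∫ x, (d0 x ^ 2 + d1 x ^ 2)))) ^ 2 :=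
        pow_le_pow_left₀ hHnn' hCS 2
    _ = 4 * (Real.sqrt (∫ x, g x ^ 2) ^ 2 * Real.sqrt (2 * ∫ x, (d0 x ^ 2 + d1 x ^ 2)) ^ 2) := by
        ring
    _ = 8 * (∫ x, (d0 x ^ 2 + d1 x ^ 2)) * ∫ x, g x ^ 2 := by rw [hs1, hs2]; ring

noncomputable def Jlin : (Fin 2 → ℝ) →ₗ[ℝ] (Fin 3 → ℝ) where
  toFun xh := Fin.snoc xh 0
  map_add' a b := by
    funext i
    refine Fin.lastCases ?_ (fun j => ?_) i <;> simp [-Fin.reduceLast]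
  map_smul' c a := by
    funext i
    refine Fin.lastCases ?_ (fun j => ?_) i <;> simp [-Fin.reduceLast]

noncomputable def Jc : (Fin 2 → ℝ) →L[ℝ] (Fin 3 → ℝ) := LinearMap.toContinuousLinearMap Jlin

lemma snoc_decomp (xh : Fin 2 → ℝ) (t : ℝ) :
    (Fin.snoc xh t : Fin 3 → ℝ) = Jc xh + Fin.snoc (0 : Fin 2 → ℝ) t := by
  funext i
  refine Fin.lastCases ?_ (fun j => ?_) i <;>
    simp [-Fin.reduceLast, Jc, Jlin, LinearMap.coe_mk, AddHom.coe_mk]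

lemma Jc_single (j : Fin 2) : Jc (Pi.single j 1) = Pi.single (Fin.castSucc j) 1 := by
  show (Fin.snoc (Pi.single j 1) 0 : Fin 3 → ℝ) = Pi.single (Fin.castSucc j) 1
  funext i
  refine Fin.lastCases ?_ (fun k => ?_) i
  · simp [-Fin.reduceLast, (Fin.castSucc_lt_last j).ne]
  · simp [Pi.single_apply, Fin.castSucc_inj]

lemma closedEmb (t : ℝ) :
    Topology.IsClosedEmbedding (fun xh : Fin 2 → ℝ => (Fin.snoc xh t : Fin 3 → ℝ)) := by
  have hinj : LinearMap.ker Jlin = ⊥ := by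
    rw [LinearMap.ker_eq_bot]
    intro a b h
    funext j
    have := congrFun h (Fin.castSucc j)
    simpa [Jlin] using this
  have h1 : Topology.IsClosedEmbedding Jlin := LinearMap.isClosedEmbedding_of_injective hinj
  have h2 := (Homeomorph.addRight (Fin.snoc (0 : Fin 2 → ℝ) t : Fin 3 → ℝ)).isClosedEmbedding
  have h3 := h2.comp h1
  convert h3 using 1
  funext xh
  show (Fin.snoc xh t : Fin 3 → ℝ) = Jlin xh + Fin.snoc (0 : Fin 2 → ℝ) t
  exact snoc_decomp xh t

lemma slice_hasFDeriv {ψ : (Fin 3 → ℝ) → ℝ} (hψ : ContDiff ℝ (⊤ : ℕ∞) ψ) (t : ℝ) (xh : Fin 2 → ℝ) :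
    HasFDerivAt (fun xh : Fin 2 → ℝ => ψ (Fin.snoc xh t))
      ((fderiv ℝ ψ (Fin.snoc xh t)).comp Jc) xh := by
  have haff : HasFDerivAt (fun xh : Fin 2 → ℝ => (Fin.snoc xh t : Fin 3 → ℝ)) Jc xh := by
    have : HasFDerivAt (fun xh : Fin 2 → ℝ => Jc xh + Fin.snoc (0 : Fin 2 → ℝ) t) Jc xh :=
      (Jc.hasFDerivAt).add_const _
    refine this.congr_of_eventuallyEq (Filter.Eventually.of_forall fun y => ?_)
    exact snoc_decomp y t
  exact (((hψ.differentiable (by simp)) _).hasFDerivAt).comp xh haff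

lemma slice_fderiv_single {ψ : (Fin 3 → ℝ) → ℝ} (hψ : ContDiff ℝ (⊤ : ℕ∞) ψ) (t : ℝ) (xh : Fin 2 → ℝ)
    (j : Fin 2) :
    fderiv ℝ (fun xh : Fin 2 → ℝ => ψ (Fin.snoc xh t)) xh (Pi.single j 1)
      = fderiv ℝ ψ (Fin.snoc xh t) (Pi.single (Fin.castSucc j) 1) := by
  rw [(slice_hasFDeriv hψ t xh).fderiv]
  simp [Jc_single]

lemma slice_contDiff {ψ : (Fin 3 → ℝ) → ℝ} (hψ : ContDiff ℝ (⊤ : ℕ∞) ψ) (t : ℝ) :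
    ContDiff ℝ (⊤ : ℕ∞) (fun xh : Fin 2 → ℝ => ψ (Fin.snoc xh t)) := by
  have h : (fun xh : Fin 2 → ℝ => ψ (Fin.snoc xh t))
      = ψ ∘ (fun xh : Fin 2 → ℝ => Jc xh + Fin.snoc (0 : Fin 2 → ℝ) t) := by
    funext y
    simp only [Function.comp_apply]
    rw [← snoc_decomp]
  rw [h]
  exact hψ.comp (Jc.contDiff.add contDiff_const)

lemma slice_compactSupport {ψ : (Fin 3 → ℝ) → ℝ} (hsupp : HasCompactSupport ψ) (t : ℝ) :
    HasCompactSupport (fun xh : Fin 2 → ℝ => ψ (Fin.snoc xh t)) := by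
  have := hsupp.comp_isClosedEmbedding (closedEmb t)
  simpa [Function.comp_def] using this

/-- There is a constant `C > 0` such that for every smooth, compactly supported
`ψ : ℝ³ → ℝ`, the mixed norm `‖ψ‖_{L²_v(L⁴_h)}` is bounded by
`C ‖∇_h ψ‖_{L²}^{1/2} ‖ψ‖_{L²}^{1/2}`. -/
theorem stmt11 :
    ∃ C : ℝ, 0 < C ∧
      ∀ ψ : (Fin 3 → ℝ) → ℝ, ContDiff ℝ (⊤ : ℕ∞) ψ → HasCompactSupport ψ →
        (∫ x₃ : ℝ, (∫ xh : Fin 2 → ℝ, (ψ (Fin.snoc xh x₃)) ^ 4) ^ ((1 : ℝ) / 2)) ^ ((1 : ℝ) / 2)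
          ≤ C * Real.sqrt (∫ x : Fin 3 → ℝ, ((pd 0 ψ x) ^ 2 + (pd 1 ψ x) ^ 2)) ^ ((1 : ℝ) / 2)
              * Real.sqrt (∫ x : Fin 3 → ℝ, ψ x ^ 2) ^ ((1 : ℝ) / 2) := by
  refine ⟨2, by norm_num, fun ψ hψ hsupp => ?_⟩
  -- slice integrals
  set A : ℝ → ℝ := fun t => ∫ xh : Fin 2 → ℝ, (ψ (Fin.snoc xh t)) ^ 4 with hAdef
  set B : ℝ → ℝ := fun t => ∫ xh : Fin 2 → ℝ,
      (pd 0 ψ (Fin.snoc xh t) ^ 2 + pd 1 ψ (Fin.snoc xh t) ^ 2) with hBdef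
  set D : ℝ → ℝ := fun t => ∫ xh : Fin 2 → ℝ, (ψ (Fin.snoc xh t)) ^ 2 with hDdef
  have hAnn : ∀ t, 0 ≤ A t := fun t => integral_nonneg fun xh => by positivity
  have hBnn : ∀ t, 0 ≤ B t := fun t => integral_nonneg fun xh => by positivity
  have hDnn : ∀ t, 0 ≤ D t := fun t => integral_nonneg fun xh => by positivity
  -- slice inequality
  have hslice : ∀ t, A t ≤ 8 * B t * D t := by
    intro t
    have h := lady (slice_contDiff hψ t) (slice_compactSupport hsupp t)
    have hB : (∫ xh : Fin 2 → ℝ,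
        ((fderiv ℝ (fun xh : Fin 2 → ℝ => ψ (Fin.snoc xh t)) xh (Pi.single 0 1)) ^ 2
          + (fderiv ℝ (fun xh : Fin 2 → ℝ => ψ (Fin.snoc xh t)) xh (Pi.single 1 1)) ^ 2)) = B t := by
      refine integral_congr_ae (Filter.Eventually.of_forall fun xh => ?_)
      show (fderiv ℝ (fun xh : Fin 2 → ℝ => ψ (Fin.snoc xh t)) xh (Pi.single 0 1)) ^ 2
          + (fderiv ℝ (fun xh : Fin 2 → ℝ => ψ (Fin.snoc xh t)) xh (Pi.single 1 1)) ^ 2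
          = pd 0 ψ (Fin.snoc xh t) ^ 2 + pd 1 ψ (Fin.snoc xh t) ^ 2
      rw [slice_fderiv_single hψ, slice_fderiv_single hψ]
      simp [pd]
    rw [hB] at h
    exact h
  -- Fubini setup
  set e := MeasurableEquiv.piFinSuccAbove (fun _ : Fin 3 => ℝ) (Fin.last 2) with hedef
  have mp := MeasureTheory.volume_preserving_piFinSuccAbove (fun _ : Fin 3 => ℝ) (Fin.last 2)
  have hsymm : ∀ (t : ℝ) (xh : Fin 2 → ℝ), e.symm (t, xh) = Fin.snoc xh t := by
    intro t xh
    rw [hedef, MeasurableEquiv.piFinSuccAbove_symm_apply]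
    simp [-Fin.reduceLast, Fin.insertNthEquiv, Fin.insertNth_last', Fin.snocEquiv]
  have fubini : ∀ F : (Fin 3 → ℝ) → ℝ, Integrable F →
      (∫ x, F x) = ∫ t : ℝ, ∫ xh : Fin 2 → ℝ, F (Fin.snoc xh t) := by
    intro F hF
    rw [← (MeasurePreserving.symm e mp).integral_comp e.symm.measurableEmbedding F]
    have hint : Integrable (F ∘ e.symm) ((volume : Measure ℝ).prod (volume : Measure (Fin 2 → ℝ))) :=
      ((MeasurePreserving.symm e mp).integrable_comp_emb e.symm.measurableEmbedding).mpr hF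
    have hprod := MeasureTheory.integral_prod _ hint
    simp only [Function.comp_apply] at hprod
    rw [Measure.volume_eq_prod, hprod]
    refine integral_congr_ae (Filter.Eventually.of_forall fun t => ?_)
    refine integral_congr_ae (Filter.Eventually.of_forall fun xh => ?_)
    simp [hsymm]
  -- integrable marginals
  have hpd0c : Continuous (pd 0 ψ) := (hψ.continuous_fderiv (by simp)).clm_apply continuous_const
  have hpd1c : Continuous (pd 1 ψ) := (hψ.continuous_fderiv (by simp)).clm_apply continuous_const
  have hfdcs : HasCompactSupport (fderiv ℝ ψ) := hsupp.fderiv ℝ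
  have hpd0cs : HasCompactSupport (pd 0 ψ) := by
    exact
      hfdcs.comp_left (g := fun L : (Fin 3 → ℝ) →L[ℝ] ℝ => L (Pi.single 0 1)) (by simp)
  have hpd1cs : HasCompactSupport (pd 1 ψ) := by
    exact
      hfdcs.comp_left (g := fun L : (Fin 3 → ℝ) →L[ℝ] ℝ => L (Pi.single 1 1)) (by simp)
  set F1 : (Fin 3 → ℝ) → ℝ := fun x => pd 0 ψ x ^ 2 + pd 1 ψ x ^ 2 with hF1def
  set F2 : (Fin 3 → ℝ) → ℝ := fun x => ψ x ^ 2 with hF2def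
  have hF1cs : HasCompactSupport F1 := by
    apply HasCompactSupport.add
    · simpa [Function.comp_def] using hpd0cs.comp_left (g := fun y : ℝ => y ^ 2) (by simp)
    · simpa [Function.comp_def] using hpd1cs.comp_left (g := fun y : ℝ => y ^ 2) (by simp)
  have hF1int : Integrable F1 :=
    ((hpd0c.pow 2).add (hpd1c.pow 2)).integrable_of_hasCompactSupport hF1cs
  have hF2int : Integrable F2 := by
    have hcs : HasCompactSupport (fun x => ψ x ^ 2) := hsupp.comp_left (g := fun y : ℝ => y ^ 2) (by simp)
    exact (hψ.continuous.pow 2).integrable_of_hasCompactSupport hcs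
  -- Fubini identities
  have hBfub : (∫ x, F1 x) = ∫ t, B t := fubini F1 hF1int
  have hDfub : (∫ x, F2 x) = ∫ t, D t := fubini F2 hF2int
  -- integrability of marginals
  have hmarg : ∀ F : (Fin 3 → ℝ) → ℝ, Integrable F →
      Integrable (fun t : ℝ => ∫ xh : Fin 2 → ℝ, F (Fin.snoc xh t)) := by
    intro F hF
    have hint : Integrable (F ∘ ⇑e.symm) ((volume : Measure ℝ).prod (volume : Measure (Fin 2 → ℝ))) := by
      have := (MeasurePreserving.symm e mp).integrable_comp_emb e.symm.measurableEmbedding (g := F)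
      rw [← Measure.volume_eq_prod]
      exact this.mpr hF
    have h2 := hint.integral_prod_left
    refine h2.congr (Filter.Eventually.of_forall fun t => ?_)
    refine integral_congr_ae (Filter.Eventually.of_forall fun xh => ?_)
    simp [hsymm]
  have hBint : Integrable B := hmarg F1 hF1int
  have hDint : Integrable D := hmarg F2 hF2int
  -- Memℒp of sqrt of marginals
  have hofReal2 : ENNReal.ofReal (2:ℝ) = 2 := by norm_num
  have hsB : MemLp (fun t => Real.sqrt (B t)) (ENNReal.ofReal 2) volume := by
    rw [hofReal2]
    refine (memLp_two_iff_integrable_sq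
      (Real.continuous_sqrt.comp_aestronglyMeasurable hBint.aestronglyMeasurable)).mpr ?_
    refine hBint.congr (Filter.Eventually.of_forall fun t => ?_)
    exact (Real.sq_sqrt (hBnn t)).symm
  have hsD : MemLp (fun t => Real.sqrt (D t)) (ENNReal.ofReal 2) volume := by
    rw [hofReal2]
    refine (memLp_two_iff_integrable_sq
      (Real.continuous_sqrt.comp_aestronglyMeasurable hDint.aestronglyMeasurable)).mpr ?_
    refine hDint.congr (Filter.Eventually.of_forall fun t => ?_)
    exact (Real.sq_sqrt (hDnn t)).symm
  -- Hölder in the vertical variable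
  have hp2 : (2:ℝ).HolderConjugate 2 := Real.holderConjugate_iff.mpr ⟨one_lt_two, by norm_num⟩
  have hCS2 := integral_mul_le_Lp_mul_Lq_of_nonneg hp2
    (Filter.Eventually.of_forall fun t => Real.sqrt_nonneg (B t))
    (Filter.Eventually.of_forall fun t => Real.sqrt_nonneg (D t)) hsB hsD
  have eB : (∫ t, Real.sqrt (B t) ^ (2:ℝ)) = ∫ t, B t :=
    integral_congr_ae (Filter.Eventually.of_forall fun t => by
      simp only [Real.rpow_two, Real.sq_sqrt (hBnn t)])
  have eD : (∫ t, Real.sqrt (D t) ^ (2:ℝ)) = ∫ t, D t :=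
    integral_congr_ae (Filter.Eventually.of_forall fun t => by
      simp only [Real.rpow_two, Real.sq_sqrt (hDnn t)])
  rw [eB, eD] at hCS2
  -- integrability of the product
  have hprodint : Integrable (fun t => Real.sqrt (B t) * Real.sqrt (D t)) := by
    refine Integrable.mono' ((hBint.add hDint).div_const 2)
      ((Real.continuous_sqrt.comp_aestronglyMeasurable hBint.aestronglyMeasurable).mul
        (Real.continuous_sqrt.comp_aestronglyMeasurable hDint.aestronglyMeasurable))
      (Filter.Eventually.of_forall fun t => ?_)
    rw [Real.norm_eq_abs, abs_of_nonneg (mul_nonneg (Real.sqrt_nonneg _) (Real.sqrt_nonneg _))]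
    show Real.sqrt (B t) * Real.sqrt (D t) ≤ (B t + D t) / 2
    have h1 := Real.sq_sqrt (hBnn t)
    have h2 := Real.sq_sqrt (hDnn t)
    nlinarith [sq_nonneg (Real.sqrt (B t) - Real.sqrt (D t))]
  -- main vertical estimate
  have step : (∫ t, (A t) ^ ((1:ℝ)/2))
      ≤ Real.sqrt 8 * ((∫ t, B t) ^ ((1:ℝ)/2) * (∫ t, D t) ^ ((1:ℝ)/2)) := by
    have h1 : (∫ t, (A t) ^ ((1:ℝ)/2))
        ≤ ∫ t, Real.sqrt 8 * (Real.sqrt (B t) * Real.sqrt (D t)) := by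
      refine integral_mono_of_nonneg
        (Filter.Eventually.of_forall fun t => Real.rpow_nonneg (hAnn t) _)
        (hprodint.const_mul _)
        (Filter.Eventually.of_forall fun t => ?_)
      show (A t) ^ ((1:ℝ)/2) ≤ Real.sqrt 8 * (Real.sqrt (B t) * Real.sqrt (D t))
      rw [← Real.sqrt_eq_rpow]
      calc Real.sqrt (A t) ≤ Real.sqrt (8 * B t * D t) := Real.sqrt_le_sqrt (hslice t)
        _ = Real.sqrt 8 * (Real.sqrt (B t) * Real.sqrt (D t)) := by
            rw [mul_assoc, Real.sqrt_mul (by norm_num), Real.sqrt_mul (hBnn t)]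
    refine h1.trans ?_
    rw [integral_const_mul]
    refine mul_le_mul_of_nonneg_left ?_ (Real.sqrt_nonneg 8)
    exact hCS2
  -- final combination
  have hLHS : (∫ x₃ : ℝ, (∫ xh : Fin 2 → ℝ, (ψ (Fin.snoc xh x₃)) ^ 4) ^ ((1 : ℝ) / 2)) ^ ((1 : ℝ) / 2)
      = (∫ t, (A t) ^ ((1:ℝ)/2)) ^ ((1:ℝ)/2) := rfl
  have hR1 : (∫ x : Fin 3 → ℝ, ((pd 0 ψ x) ^ 2 + (pd 1 ψ x) ^ 2)) = ∫ t, B t := hBfub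
  have hR2 : (∫ x : Fin 3 → ℝ, ψ x ^ 2) = ∫ t, D t := hDfub
  rw [hLHS, hR1, hR2]
  have hIA : (0:ℝ) ≤ ∫ t, (A t) ^ ((1:ℝ)/2) :=
    integral_nonneg fun t => Real.rpow_nonneg (hAnn t) _
  have hIB : (0:ℝ) ≤ ∫ t, B t := integral_nonneg fun t => hBnn t
  have hID : (0:ℝ) ≤ ∫ t, D t := integral_nonneg fun t => hDnn t
  calc (∫ t, (A t) ^ ((1:ℝ)/2)) ^ ((1:ℝ)/2)
      ≤ (Real.sqrt 8 * ((∫ t, B t) ^ ((1:ℝ)/2) * (∫ t, D t) ^ ((1:ℝ)/2))) ^ ((1:ℝ)/2) :=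
        Real.rpow_le_rpow hIA step (by norm_num)
    _ = Real.sqrt 8 ^ ((1:ℝ)/2) * (((∫ t, B t) ^ ((1:ℝ)/2)) ^ ((1:ℝ)/2)
          * ((∫ t, D t) ^ ((1:ℝ)/2)) ^ ((1:ℝ)/2)) := by
        rw [Real.mul_rpow (Real.sqrt_nonneg 8)
            (mul_nonneg (Real.rpow_nonneg hIB _) (Real.rpow_nonneg hID _)),
          Real.mul_rpow (Real.rpow_nonneg hIB _) (Real.rpow_nonneg hID _)]
    _ = Real.sqrt 8 ^ ((1:ℝ)/2) * (Real.sqrt (∫ t, B t) ^ ((1:ℝ)/2)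
          * Real.sqrt (∫ t, D t) ^ ((1:ℝ)/2)) := by
        rw [show ((∫ t, B t) ^ ((1:ℝ)/2)) = Real.sqrt (∫ t, B t) from (Real.sqrt_eq_rpow _).symm,
          show ((∫ t, D t) ^ ((1:ℝ)/2)) = Real.sqrt (∫ t, D t) from (Real.sqrt_eq_rpow _).symm]
    _ ≤ 2 * (Real.sqrt (∫ t, B t) ^ ((1:ℝ)/2) * Real.sqrt (∫ t, D t) ^ ((1:ℝ)/2)) := by
        refine mul_le_mul_of_nonneg_right ?_
          (mul_nonneg (Real.rpow_nonneg (Real.sqrt_nonneg _) _)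
            (Real.rpow_nonneg (Real.sqrt_nonneg _) _))
        have h8 : Real.sqrt 8 ≤ 4 := by
          nlinarith [Real.sq_sqrt (by norm_num : (0:ℝ) ≤ 8), Real.sqrt_nonneg 8]
        have h4 : (4:ℝ) ^ ((1:ℝ)/2) = 2 := by
          rw [show (4:ℝ) = 2 ^ (2:ℕ) by norm_num, ← Real.rpow_natCast 2 2,
            ← Real.rpow_mul (by norm_num : (0:ℝ) ≤ 2)]
          norm_num
        calc Real.sqrt 8 ^ ((1:ℝ)/2) ≤ (4:ℝ) ^ ((1:ℝ)/2) :=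
              Real.rpow_le_rpow (Real.sqrt_nonneg 8) h8 (by norm_num)
          _ = 2 := h4
    _ = 2 * Real.sqrt (∫ t, B t) ^ ((1:ℝ)/2) * Real.sqrt (∫ t, D t) ^ ((1:ℝ)/2) := by ring
end

section
/- For every α > 0 there exists a constant κ = κ(α) > 0 such that for all vectors u, v ∈ ℝ³ one has 0 ≤ κ |u − v|² (|u| + |v|)^{2α} ≤ (|u|^{2α} u − |v|^{2α} v) · (u − v). -/
/-!
Write `A = ‖u‖^p`, `B = ‖v‖^p`. Polarization gives
`⟪A • u - B • v, u - v⟫ = (A + B)/2 ‖u - v‖² + (A - B)/2 (‖u‖² - ‖v‖²)`.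
The second term is nonnegative since `t ↦ t^p` and `t ↦ t²` are both monotone on `[0, ∞)`,
and in the first `A + B ≥ max(‖u‖, ‖v‖)^p ≥ 2^{-p} (‖u‖ + ‖v‖)^p`.
-/

open Real
open scoped InnerProductSpace

lemma real_inner_smul_sub_smul_sub_eq {E : Type*} [NormedAddCommGroup E] [InnerProductSpace ℝ E]
    (a b : ℝ) (u v : E) :
    ⟪a • u - b • v, u - v⟫_ℝ = (a + b) / 2 * ‖u - v‖ ^ 2 + (a - b) / 2 * (‖u‖ ^ 2 - ‖v‖ ^ 2) := by
  simp only [norm_sub_sq_real, inner_sub_left, inner_sub_right, real_inner_smul_left,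
    real_inner_self_eq_norm_sq, real_inner_comm v u]
  ring

lemma add_rpow_le_two_rpow_mul_add_rpow {x y p : ℝ} (hx : 0 ≤ x) (hy : 0 ≤ y) (hp : 0 ≤ p) :
    (x + y) ^ p ≤ 2 ^ p * (x ^ p + y ^ p) := by
  have hmax : max x y ^ p ≤ x ^ p + y ^ p := by
    rcases max_choice x y with h | h <;> rw [h]
    · linarith [rpow_nonneg hy p]
    · linarith [rpow_nonneg hx p]
  calc (x + y) ^ p ≤ (2 * max x y) ^ p :=
        rpow_le_rpow (by positivity) (by linarith [le_max_left x y, le_max_right x y]) hp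
    _ = 2 ^ p * max x y ^ p := mul_rpow zero_le_two (le_max_of_le_left hx)
    _ ≤ 2 ^ p * (x ^ p + y ^ p) := by gcongr

lemma rpow_sub_rpow_mul_sq_sub_sq_nonneg {x y p : ℝ} (hx : 0 ≤ x) (hy : 0 ≤ y) (hp : 0 ≤ p) :
    0 ≤ (x ^ p - y ^ p) * (x ^ 2 - y ^ 2) := by
  rcases le_total y x with h | h
  · exact mul_nonneg (sub_nonneg.2 (rpow_le_rpow hy h hp)) (sub_nonneg.2 (by gcongr))
  · exact mul_nonneg_of_nonpos_of_nonpos (sub_nonpos.2 (rpow_le_rpow hx h hp))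
      (sub_nonpos.2 (by gcongr))

lemma mul_norm_sub_sq_mul_rpow_le_inner {E : Type*} [NormedAddCommGroup E]
    [InnerProductSpace ℝ E] {p : ℝ} (hp : 0 ≤ p) (u v : E) :
    1 / (2 * 2 ^ p) * ‖u - v‖ ^ 2 * (‖u‖ + ‖v‖) ^ p ≤
      ⟪‖u‖ ^ p • u - ‖v‖ ^ p • v, u - v⟫_ℝ := by
  rw [real_inner_smul_sub_smul_sub_eq]
  have hsum := add_rpow_le_two_rpow_mul_add_rpow (norm_nonneg u) (norm_nonneg v) hp
  have hmono := rpow_sub_rpow_mul_sq_sub_sq_nonneg (norm_nonneg u) (norm_nonneg v) hp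
  have h2p : 0 < (2 : ℝ) ^ p := by positivity
  calc 1 / (2 * 2 ^ p) * ‖u - v‖ ^ 2 * (‖u‖ + ‖v‖) ^ p
      = ‖u - v‖ ^ 2 / 2 * ((‖u‖ + ‖v‖) ^ p / 2 ^ p) := by field_simp
    _ ≤ ‖u - v‖ ^ 2 / 2 * (‖u‖ ^ p + ‖v‖ ^ p) := by
        gcongr
        rwa [div_le_iff₀' h2p]
    _ ≤ _ := by nlinarith

/-- For every `α > 0` there is `κ = κ(α) > 0` such that for all `u, v ∈ ℝ³`,
`0 ≤ κ |u−v|² (|u|+|v|)^{2α} ≤ (|u|^{2α}u − |v|^{2α}v)·(u−v)`. -/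
theorem stmt12 (α : ℝ) (hα : 0 < α) :
    ∃ κ : ℝ, 0 < κ ∧
      ∀ u v : EuclideanSpace ℝ (Fin 3),
        0 ≤ κ * ‖u - v‖ ^ 2 * (‖u‖ + ‖v‖) ^ (2 * α) ∧
        κ * ‖u - v‖ ^ 2 * (‖u‖ + ‖v‖) ^ (2 * α) ≤
          (inner ℝ (‖u‖ ^ (2 * α) • u - ‖v‖ ^ (2 * α) • v) (u - v) : ℝ) := by
  refine ⟨1 / (2 * 2 ^ (2 * α)), by positivity, fun u v => ⟨by positivity, ?_⟩⟩
  exact mul_norm_sub_sq_mul_rpow_le_inner (by positivity) u v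
end
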